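/- arXiv:solv-int/9605002 — 12 statements merged into one kernel-verified Lean document; each statement's English description precedes it below -/
import Mathlib

section
/- Let H : ℝ^n × ℝ^n → M_N(ℝ) be the matrix whose s-th column is h_s, where each h_s : ℝ^n × ℝ^n → ℝ^N is differentiable and satisfies the spectral problems ∂h_s/∂p_i = a_i(λ_s) ∂h_s/∂x_i − A_i(λ_s) h_s for all 1 ≤ i ≤ n and all (p,x). Suppose H(p,x) is invertible for every (p,x), let Λ = diag(λ_1,…,λ_N) and define α := −H Λ H⁻¹. Then for every 1 ≤ i ≤ n and every (p,x): ∂α/∂p_i = Σ_{k=0}^{M} a_{ik} (∂α/∂x_i)(−α)^{k+1} + Σ_{l=0}^{M} A_{il}(−α)^{l+1} + Σ_{l=0}^{M} α A_{il}(−α)^{l}. -/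
open Finset

attribute [local instance] Matrix.linftyOpNormedAddCommGroup Matrix.linftyOpNormedSpace

/-- Partial derivative of `f` at `q` in the direction of the `i`-th `p`-coordinate. -/
noncomputable def pderivP {n : ℕ} {E : Type*} [NormedAddCommGroup E] [NormedSpace ℝ E]
    (f : (Fin n → ℝ) × (Fin n → ℝ) → E) (i : Fin n)
    (q : (Fin n → ℝ) × (Fin n → ℝ)) : E :=
  fderiv ℝ f q (Pi.single i 1, 0)

/-- Partial derivative of `f` at `q` in the direction of the `i`-th `x`-coordinate. -/
noncomputable def pderivX {n : ℕ} {E : Type*} [NormedAddCommGroup E] [NormedSpace ℝ E]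
    (f : (Fin n → ℝ) × (Fin n → ℝ) → E) (i : Fin n)
    (q : (Fin n → ℝ) × (Fin n → ℝ)) : E :=
  fderiv ℝ f q (0, Pi.single i 1)

attribute [local instance] Matrix.linftyOpNormedRing Matrix.linftyOpNormedAlgebra

/-- The identity, as a continuous linear equivalence between the pi type and matrices
with the `linftyOp` norm. -/
noncomputable def matEquiv (N : ℕ) : (Fin N → Fin N → ℝ) ≃L[ℝ] Matrix (Fin N) (Fin N) ℝ :=
  (LinearEquiv.refl ℝ (Matrix (Fin N) (Fin N) ℝ) :
    (Fin N → Fin N → ℝ) ≃ₗ[ℝ] Matrix (Fin N) (Fin N) ℝ).toContinuousLinearEquiv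

lemma matEquiv_apply (N : ℕ) (x : Fin N → Fin N → ℝ) : matEquiv N x = Matrix.of x := rfl

lemma fderiv_matrix {n N : ℕ} (h : Fin N → ((Fin n → ℝ) × (Fin n → ℝ)) → (Fin N → ℝ))
    (hdiff : ∀ s, Differentiable ℝ (h s))
    (H : ((Fin n → ℝ) × (Fin n → ℝ)) → Matrix (Fin N) (Fin N) ℝ)
    (hH : ∀ q r s, H q r s = h s q r) (q : (Fin n → ℝ) × (Fin n → ℝ))
    (v : (Fin n → ℝ) × (Fin n → ℝ)) :
    DifferentiableAt ℝ H q ∧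
      fderiv ℝ H q v = Matrix.of (fun r s => fderiv ℝ (h s) q v r) := by
  have hcomp : ∀ (s r : Fin N), (fun q => h s q r) =
      ⇑(ContinuousLinearMap.proj (R := ℝ) (φ := fun _ : Fin N => ℝ) r) ∘ (h s) := fun s r => rfl
  have hG : Differentiable ℝ (fun q => fun r s => h s q r) := by
    apply differentiable_pi.mpr; intro r
    apply differentiable_pi.mpr; intro s
    rw [hcomp s r]
    exact ((ContinuousLinearMap.proj (R := ℝ) (φ := fun _ : Fin N => ℝ) r).differentiable).comp
      (hdiff s)
  have hHeq : H = fun q => matEquiv N (fun r s => h s q r) := by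
    funext q; ext r s; rw [matEquiv_apply]; exact hH q r s
  have hd : HasFDerivAt H (((matEquiv N : (Fin N → Fin N → ℝ) →L[ℝ] Matrix (Fin N) (Fin N) ℝ)).comp
      (fderiv ℝ (fun q => fun r s => h s q r) q)) q := by
    rw [hHeq]
    exact ((matEquiv N).toContinuousLinearMap.hasFDerivAt).comp q (hG q).hasFDerivAt
  refine ⟨hd.differentiableAt, ?_⟩
  rw [hd.fderiv]
  have hdr : ∀ (r s : Fin N), DifferentiableAt ℝ (fun q => h s q r) q := fun r s => by
    rw [hcomp s r]
    exact ((ContinuousLinearMap.proj (R := ℝ) (φ := fun _ : Fin N => ℝ) r).differentiableAt).comp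
      q (hdiff s q)
  have h1 : fderiv ℝ (fun q => fun r s => h s q r) q v = fun r s => fderiv ℝ (h s) q v r := by
    funext r s
    rw [fderiv_pi (fun r => differentiableAt_pi.mpr (fun s => hdr r s))]
    simp only [ContinuousLinearMap.pi_apply]
    rw [fderiv_pi (fun s => hdr r s)]
    simp only [ContinuousLinearMap.pi_apply]
    rw [hcomp s r, fderiv_comp q
      ((ContinuousLinearMap.proj (R := ℝ) (φ := fun _ : Fin N => ℝ) r).differentiableAt)
      (hdiff s q)]
    simp
  show matEquiv N (fderiv ℝ (fun q => fun r s => h s q r) q v) = _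
  rw [h1, matEquiv_apply]

lemma alg_key {N M : ℕ} (Hq Kq D X : Matrix (Fin N) (Fin N) ℝ)
    (A' : ℕ → Matrix (Fin N) (Fin N) ℝ) (a' : ℕ → ℝ)
    (HK : Hq * Kq = 1) (KH : Kq * Hq = 1) :
    -(((∑ k ∈ range (M+1), a' k • (X * D ^ (k+1)))
        - ∑ l ∈ range (M+1), A' l * Hq * D ^ l) * D * Kq)
      + (Hq * D * Kq) * ((((∑ k ∈ range (M+1), a' k • (X * D ^ (k+1)))
        - ∑ l ∈ range (M+1), A' l * Hq * D ^ l)) * Kq) =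
    (∑ k ∈ range (M+1), a' k • ((-(X * D * Kq) + (Hq * D * Kq) * (X * Kq)) * (Hq * D * Kq) ^ (k+1)))
      + (∑ l ∈ range (M+1), A' l * (Hq * D * Kq) ^ (l+1))
      + ∑ l ∈ range (M+1), (-(Hq * D * Kq)) * A' l * (Hq * D * Kq) ^ l := by
  set β := Hq * D * Kq with hβ
  have hpow : ∀ m : ℕ, β ^ m = Hq * D ^ m * Kq := by
    intro m
    induction m with
    | zero => simp [HK]
    | succ m ih =>
      rw [pow_succ, ih, hβ, pow_succ]
      calc Hq * D ^ m * Kq * (Hq * D * Kq)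
          = Hq * D ^ m * (Kq * Hq) * D * Kq := by noncomm_ring
        _ = Hq * (D ^ m * D) * Kq := by rw [KH]; noncomm_ring
  have hDK : ∀ m : ℕ, D ^ m * Kq = Kq * β ^ m := by
    intro m
    rw [hpow]
    calc D ^ m * Kq = (Kq * Hq) * D ^ m * Kq := by rw [KH]; noncomm_ring
      _ = Kq * (Hq * D ^ m * Kq) := by noncomm_ring
  simp only [sub_mul, mul_sub, neg_sub, Finset.sum_mul, Finset.mul_sum]
  have e1 : ∀ k ∈ range (M+1), a' k • (X * D ^ (k+1)) * D * Kq
      = a' k • (X * (D ^ (k+2) * Kq)) := by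
    intro k _
    rw [smul_mul_assoc, smul_mul_assoc]
    congr 1
    rw [pow_succ D (k+1)]
    noncomm_ring
  have e2 : ∀ l ∈ range (M+1), A' l * Hq * D ^ l * D * Kq = A' l * β ^ (l+1) := by
    intro l _
    rw [hpow, pow_succ D l]
    noncomm_ring
  have e3 : ∀ k ∈ range (M+1), β * (a' k • (X * D ^ (k+1)) * Kq)
      = a' k • (β * (X * (D ^ (k+1) * Kq))) := by
    intro k _
    rw [smul_mul_assoc, mul_smul_comm]
    congr 1
    noncomm_ring
  have e4 : ∀ l ∈ range (M+1), β * (A' l * Hq * D ^ l * Kq) = β * A' l * β ^ l := by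
    intro l _
    rw [hpow]
    noncomm_ring
  rw [Finset.sum_congr rfl e1, Finset.sum_congr rfl e2, Finset.sum_congr rfl e3,
    Finset.sum_congr rfl e4]
  have e5 : ∀ k ∈ range (M+1), a' k • ((-(X * D * Kq) + β * (X * Kq)) * β ^ (k+1))
      = a' k • (β * (X * (D ^ (k+1) * Kq))) - a' k • (X * (D ^ (k+2) * Kq)) := by
    intro k _
    rw [← smul_sub]
    congr 1
    rw [add_mul, neg_mul]
    have h1 : X * D * Kq * β ^ (k+1) = X * (D ^ (k+2) * Kq) := by
      calc X * D * Kq * β ^ (k+1) = X * D * (Kq * β ^ (k+1)) := by noncomm_ring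
        _ = X * D * (D ^ (k+1) * Kq) := by rw [← hDK]
        _ = X * (D ^ (k+2) * Kq) := by rw [pow_succ' D (k+1)]; noncomm_ring
    have h2 : β * (X * Kq) * β ^ (k+1) = β * (X * (D ^ (k+1) * Kq)) := by
      calc β * (X * Kq) * β ^ (k+1) = β * (X * (Kq * β ^ (k+1))) := by noncomm_ring
        _ = β * (X * (D ^ (k+1) * Kq)) := by rw [← hDK]
    rw [h1, h2]
    abel
  rw [Finset.sum_congr rfl e5, Finset.sum_sub_distrib]
  simp only [neg_mul, Finset.sum_neg_distrib]
  abel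

theorem stmt_0 (n N M : ℕ) (hn : 2 ≤ n) (hN : 2 ≤ N)
    (a : Fin n → ℕ → ℝ)
    (A : Fin n → ℕ → ((Fin n → ℝ) × (Fin n → ℝ)) → Matrix (Fin N) (Fin N) ℝ)
    (hA : ∀ i l, l ≤ M → ContDiff ℝ 1 (A i l))
    (lam : Fin N → ℝ)
    (h : Fin N → ((Fin n → ℝ) × (Fin n → ℝ)) → (Fin N → ℝ))
    (hdiff : ∀ s, Differentiable ℝ (h s))
    (hspec : ∀ s i q,
      pderivP (h s) i q =
        (∑ k ∈ Finset.range (M + 1), a i k * lam s ^ (k + 1)) • pderivX (h s) i q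
          - (∑ l ∈ Finset.range (M + 1), lam s ^ l • A i l q).mulVec (h s q))
    (H : ((Fin n → ℝ) × (Fin n → ℝ)) → Matrix (Fin N) (Fin N) ℝ)
    (hH : ∀ q r s, H q r s = h s q r)
    (hinv : ∀ q, IsUnit (H q))
    (α : ((Fin n → ℝ) × (Fin n → ℝ)) → Matrix (Fin N) (Fin N) ℝ)
    (hα : ∀ q, α q = -(H q * Matrix.diagonal lam * (H q)⁻¹)) :
    ∀ (i : Fin n) q,
      pderivP α i q =
        (∑ k ∈ Finset.range (M + 1), a i k • (pderivX α i q * (-α q) ^ (k + 1)))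
          + (∑ l ∈ Finset.range (M + 1), A i l q * (-α q) ^ (l + 1))
          + ∑ l ∈ Finset.range (M + 1), α q * A i l q * (-α q) ^ l := by
  intro i q
  haveI : CompleteSpace (Matrix (Fin N) (Fin N) ℝ) := FiniteDimensional.complete ℝ _
  have hmat : ∀ q v, DifferentiableAt ℝ H q ∧
      fderiv ℝ H q v = Matrix.of fun r s => fderiv ℝ (h s) q v r := fderiv_matrix h hdiff H hH
  have hHd : ∀ q, DifferentiableAt ℝ H q := fun q => (hmat q 0).1
  set D : Matrix (Fin N) (Fin N) ℝ := Matrix.diagonal lam with hD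
  set K : ((Fin n → ℝ) × (Fin n → ℝ)) → Matrix (Fin N) (Fin N) ℝ := fun q => (H q)⁻¹ with hKdef
  have hKinv : K = fun q => Ring.inverse (H q) :=
    funext fun q => Matrix.nonsing_inv_eq_ringInverse _
  have hKd : ∀ q, DifferentiableAt ℝ K q := fun q => by
    rw [hKinv]; exact (hHd q).inverse (hinv q)
  have HK : ∀ q, H q * K q = 1 := fun q =>
    Matrix.mul_nonsing_inv _ ((Matrix.isUnit_iff_isUnit_det _).mp (hinv q))
  have KH : ∀ q, K q * H q = 1 := fun q =>
    Matrix.nonsing_inv_mul _ ((Matrix.isUnit_iff_isUnit_det _).mp (hinv q))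
  -- derivative of a product, applied at a vector
  have mulrule : ∀ (f g : ((Fin n → ℝ) × (Fin n → ℝ)) → Matrix (Fin N) (Fin N) ℝ),
      DifferentiableAt ℝ f q → DifferentiableAt ℝ g q → ∀ v,
      fderiv ℝ (fun q => f q * g q) q v = fderiv ℝ f q v * g q + f q * fderiv ℝ g q v := by
    intro f g hf hg v
    erw [(hf.hasFDerivAt.fun_mul' hg.hasFDerivAt).fderiv]
    change f q * fderiv ℝ g q v + fderiv ℝ f q v * g q = _
    exact add_comm _ _
  -- derivative of K
  have hDK : ∀ v, fderiv ℝ K q v = -(K q * (fderiv ℝ H q v * K q)) := by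
    intro v
    have h0 : fderiv ℝ (fun q => H q * K q) q v = 0 := by
      have he : (fun q => H q * K q) = fun _ => (1 : Matrix (Fin N) (Fin N) ℝ) := funext HK
      rw [he, fderiv_fun_const]
      simp
    rw [mulrule H K (hHd q) (hKd q) v] at h0
    have h1 : H q * fderiv ℝ K q v = -(fderiv ℝ H q v * K q) :=
      eq_neg_of_add_eq_zero_right h0
    calc fderiv ℝ K q v = (K q * H q) * fderiv ℝ K q v := by rw [KH q, one_mul]
      _ = K q * (H q * fderiv ℝ K q v) := by rw [mul_assoc]
      _ = -(K q * (fderiv ℝ H q v * K q)) := by rw [h1, mul_neg]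
  -- derivative of α
  have hαeq : α = fun q => -(H q * D * K q) := funext fun q => hα q
  have hFd : DifferentiableAt ℝ (fun q => H q * D) q :=
    (hHd q).mul (differentiableAt_const _)
  have hprod : DifferentiableAt ℝ (fun q => (H q * D) * K q) q := hFd.mul (hKd q)
  have hDF : ∀ v, fderiv ℝ (fun q => H q * D) q v = fderiv ℝ H q v * D := by
    intro v
    rw [mulrule H (fun _ => D) (hHd q) (differentiableAt_const _) v, fderiv_fun_const]
    simp
  have hDα : ∀ v, fderiv ℝ α q v
      = -(fderiv ℝ H q v * D * K q) + (H q * D * K q) * (fderiv ℝ H q v * K q) := by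
    intro v
    rw [hαeq]
    have : fderiv ℝ (fun q => -(H q * D * K q)) q = -fderiv ℝ (fun q => (H q * D) * K q) q := by
      exact fderiv_neg
    rw [this]
    simp only [ContinuousLinearMap.neg_apply]
    rw [mulrule (fun q => H q * D) K hFd (hKd q) v, hDF v, hDK v]
    rw [neg_add, mul_neg, neg_neg]
    congr 1
    rw [mul_assoc (H q * D) (K q), ← mul_assoc (H q * D) (K q)]
  -- spectral problem in matrix form
  have hspecM : fderiv ℝ H q (Pi.single i 1, 0)
      = (∑ k ∈ range (M+1), a i k • (fderiv ℝ H q (0, Pi.single i 1) * D ^ (k+1)))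
        - ∑ l ∈ range (M+1), A i l q * H q * D ^ l := by
    have k1 : ∀ (Z : Matrix (Fin N) (Fin N) ℝ) (m : ℕ) (r s : Fin N),
        (Z * D ^ m) r s = Z r s * lam s ^ m := by
      intro Z m r s
      rw [hD, Matrix.diagonal_pow, Matrix.mul_diagonal, Pi.pow_apply]
    have k2 : ∀ (l : ℕ) (r s : Fin N), (A i l q * H q) r s = ((A i l q).mulVec (h s q)) r := by
      intro l r s
      rw [Matrix.mul_apply]
      simp only [Matrix.mulVec, dotProduct, hH]
    rw [(hmat q (Pi.single i 1, 0)).2, (hmat q (0, Pi.single i 1)).2]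
    ext r s
    have hs := congrFun (hspec s i q) r
    unfold pderivP pderivX at hs
    simp only [Pi.sub_apply, Pi.smul_apply, smul_eq_mul] at hs
    simp only [Matrix.of_apply, Matrix.sub_apply, Matrix.sum_apply, Matrix.smul_apply,
      smul_eq_mul, k1, k2]
    rw [hs]
    congr 1
    · rw [Finset.sum_mul]
      apply Finset.sum_congr rfl
      intro k _
      ring
    · simp only [Matrix.mulVec, dotProduct, Matrix.sum_apply, Matrix.smul_apply,
        Finset.sum_apply, smul_eq_mul, Finset.sum_mul, Finset.mul_sum]
      rw [Finset.sum_comm]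
      apply Finset.sum_congr rfl
      intro l _
      apply Finset.sum_congr rfl
      intro j _
      ring
  -- put everything together
  have hpP : pderivP α i q
      = -(fderiv ℝ H q (Pi.single i 1, 0) * D * K q)
        + (H q * D * K q) * (fderiv ℝ H q (Pi.single i 1, 0) * K q) := hDα _
  have hpX : pderivX α i q
      = -(fderiv ℝ H q (0, Pi.single i 1) * D * K q)
        + (H q * D * K q) * (fderiv ℝ H q (0, Pi.single i 1) * K q) := hDα _
  have hnegα : -α q = H q * D * K q := by
    rw [hα q]
    exact neg_neg _
  have hαq' : α q = -(H q * D * K q) := by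
    rw [hα q]
  rw [hpP, hpX, hspecM, hnegα, hαq']
  exact alg_key (M := M) (H q) (K q) D (fderiv ℝ H q (0, Pi.single i 1))
    (fun l => A i l q) (fun k => a i k) (HK q) (KH q)
end

section
/- Let R be an associative unital ring (e.g. the ring of N×N real matrices), let A_0,…,A_M, D, α ∈ R, and let a_0,…,a_M be scalars acting on R. Define Ã_M := A_M + a_M·D and, for 1 ≤ m ≤ M, Ã_{m−1} := A_{m−1} + a_{m−1}·D + α A_m − Ã_m α. Then for every 1 ≤ r ≤ M: Ã_{r−1} = Σ_{k=0}^{M−r+1} (A_{r+k−1} + a_{r+k−1}·D)(−α)^k + Σ_{k=0}^{M−r} α A_{r+k}(−α)^k. -/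
open Finset

theorem stmt_2 (R : Type*) [Ring R] [Algebra ℝ R] (M : ℕ)
    (A : ℕ → R) (D α : R) (a : ℕ → ℝ)
    (At : ℕ → R)
    (hM : At M = A M + a M • D)
    (hrec : ∀ m, 1 ≤ m → m ≤ M →
      At (m - 1) = A (m - 1) + a (m - 1) • D + α * A m - At m * α) :
    ∀ r, 1 ≤ r → r ≤ M →
      At (r - 1) =
        (∑ k ∈ Finset.range (M - r + 2), (A (r + k - 1) + a (r + k - 1) • D) * (-α) ^ k)
          + ∑ k ∈ Finset.range (M - r + 1), α * A (r + k) * (-α) ^ k := by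
  have helper : ∀ (f : ℕ → R) (m : ℕ),
      -((∑ k ∈ Finset.range m, f k * (-α) ^ k) * α)
        = ∑ k ∈ Finset.range m, f k * (-α) ^ (k + 1) := by
    intro f m
    rw [Finset.sum_mul, ← Finset.sum_neg_distrib]
    refine Finset.sum_congr rfl fun k _ => ?_
    simp [pow_succ, mul_assoc]
  have key : ∀ n r, 1 ≤ r → r ≤ M → M - r = n →
      At (r - 1) =
        (∑ k ∈ Finset.range (M - r + 2), (A (r + k - 1) + a (r + k - 1) • D) * (-α) ^ k)
          + ∑ k ∈ Finset.range (M - r + 1), α * A (r + k) * (-α) ^ k := by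
    intro n
    induction n with
    | zero =>
      intro r hr1 hrM hn
      have hrM' : r = M := by omega
      subst hrM'
      rw [hrec r hr1 le_rfl, hM, hn]
      simp [Finset.sum_range_succ]
      noncomm_ring
    | succ n ih =>
      intro r hr1 hrM hn
      have hAt : At r = (∑ k ∈ Finset.range (n + 2), (A (r + k) + a (r + k) • D) * (-α) ^ k)
          + ∑ k ∈ Finset.range (n + 1), α * A (r + k + 1) * (-α) ^ k := by
        have h := ih (r + 1) (by omega) (by omega) (by omega)
        have e : M - (r + 1) = n := by omega
        rw [e] at h
        simp only [Nat.add_sub_cancel,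
          show ∀ k, r + 1 + k - 1 = r + k from fun k => by omega,
          show ∀ k, r + 1 + k = r + k + 1 from fun k => by omega] at h
        exact h
      have e1 : M - r + 2 = n + 2 + 1 := by omega
      have e2 : M - r + 1 = n + 1 + 1 := by omega
      rw [e2, Finset.sum_range_succ' _ (n + 1), e1, Finset.sum_range_succ' _ (n + 2),
        hrec r hr1 hrM, hAt, sub_eq_add_neg, add_mul, neg_add, helper, helper]
      simp only [show ∀ k, r + (k + 1) = r + k + 1 from fun k => rfl,
        Nat.add_sub_cancel, Nat.add_zero, pow_zero, mul_one]
      abel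
  intro r hr1 hrM
  exact key (M - r) r hr1 hrM rfl
end

section
/- Fix λ ∈ ℝ. Let α : ℝ^n × ℝ^n → M_N(ℝ) be differentiable and let Ã_{il} : ℝ^n × ℝ^n → M_N(ℝ) (1 ≤ i ≤ n, 0 ≤ l ≤ M) satisfy, for every 1 ≤ i ≤ n and every (p,x): (i) ∂α/∂p_i = α A_{i0} − Ã_{i0} α; (ii) Ã_{iM} = A_{iM} + a_{iM} ∂α/∂x_i; (iii) Ã_{i,m−1} = A_{i,m−1} + a_{i,m−1} ∂α/∂x_i + α A_{im} − Ã_{im} α for 1 ≤ m ≤ M. If Ψ : ℝ^n × ℝ^n → M_N(ℝ) is differentiable and satisfies ∂Ψ/∂p_i − a_i(λ) ∂Ψ/∂x_i = −A_i(λ)Ψ for all 1 ≤ i ≤ n, then Ψ̃ := (λI + α)Ψ satisfies ∂Ψ̃/∂p_i − a_i(λ) ∂Ψ̃/∂x_i = −Ã_i(λ)Ψ̃ for all 1 ≤ i ≤ n, where Ã_i(λ) = Σ_{l=0}^{M} Ã_{il} λ^{l}. -/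
open Finset

attribute [local instance] Matrix.linftyOpNormedAddCommGroup Matrix.linftyOpNormedSpace
attribute [local instance] Matrix.linftyOpNormedRing

attribute [local instance] Matrix.linftyOpNormedAlgebra

lemma fderiv_mul_apply {n N : ℕ}
    (f g : (Fin n → ℝ) × (Fin n → ℝ) → Matrix (Fin N) (Fin N) ℝ)
    (hf : Differentiable ℝ f) (hg : Differentiable ℝ g)
    (q : (Fin n → ℝ) × (Fin n → ℝ)) (v : (Fin n → ℝ) × (Fin n → ℝ)) :
    fderiv ℝ (fun q' => f q' * g q') q v
      = f q * fderiv ℝ g q v + fderiv ℝ f q v * g q := by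
  erw [show (fun q' => f q' * g q') = f * g from rfl, ((hf q).hasFDerivAt.mul' (hg q).hasFDerivAt).fderiv]
  rfl

theorem stmt_4 (n N M : ℕ) (hn : 2 ≤ n) (hN : 2 ≤ N)
    (a : Fin n → ℕ → ℝ) (lam : ℝ)
    (A : Fin n → ℕ → ((Fin n → ℝ) × (Fin n → ℝ)) → Matrix (Fin N) (Fin N) ℝ)
    (hA : ∀ i l, l ≤ M → Differentiable ℝ (A i l))
    (α : ((Fin n → ℝ) × (Fin n → ℝ)) → Matrix (Fin N) (Fin N) ℝ)
    (hα : Differentiable ℝ α)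
    (At : Fin n → ℕ → ((Fin n → ℝ) × (Fin n → ℝ)) → Matrix (Fin N) (Fin N) ℝ)
    (hi : ∀ (i : Fin n) q, pderivP α i q = α q * A i 0 q - At i 0 q * α q)
    (hii : ∀ (i : Fin n) q, At i M q = A i M q + a i M • pderivX α i q)
    (hiii : ∀ (i : Fin n) (m : ℕ), 1 ≤ m → m ≤ M → ∀ q,
      At i (m - 1) q =
        A i (m - 1) q + a i (m - 1) • pderivX α i q + α q * A i m q - At i m q * α q)
    (Ψ : ((Fin n → ℝ) × (Fin n → ℝ)) → Matrix (Fin N) (Fin N) ℝ)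
    (hΨdiff : Differentiable ℝ Ψ)
    (hΨ : ∀ (i : Fin n) q,
      pderivP Ψ i q - (∑ k ∈ Finset.range (M + 1), a i k * lam ^ (k + 1)) • pderivX Ψ i q
        = -((∑ l ∈ Finset.range (M + 1), lam ^ l • A i l q) * Ψ q)) :
    ∀ (i : Fin n) q,
      pderivP (fun q' => (lam • (1 : Matrix (Fin N) (Fin N) ℝ) + α q') * Ψ q') i q
        - (∑ k ∈ Finset.range (M + 1), a i k * lam ^ (k + 1)) •
            pderivX (fun q' => (lam • (1 : Matrix (Fin N) (Fin N) ℝ) + α q') * Ψ q') i q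
      = -((∑ l ∈ Finset.range (M + 1), lam ^ l • At i l q) *
          ((lam • (1 : Matrix (Fin N) (Fin N) ℝ) + α q) * Ψ q)) := by
  intro i q
  set G : ((Fin n → ℝ) × (Fin n → ℝ)) → Matrix (Fin N) (Fin N) ℝ :=
    fun q' => lam • (1 : Matrix (Fin N) (Fin N) ℝ) + α q' with hG
  have hGdiff : Differentiable ℝ G := (differentiable_const _).add hα
  set aL : ℝ := ∑ k ∈ Finset.range (M + 1), a i k * lam ^ (k + 1) with haL
  set AL : Matrix (Fin N) (Fin N) ℝ := ∑ l ∈ Finset.range (M + 1), lam ^ l • A i l q with hAL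
  set AtL : Matrix (Fin N) (Fin N) ℝ := ∑ l ∈ Finset.range (M + 1), lam ^ l • At i l q with hAtL
  -- product rule
  have hGd : ∀ v, fderiv ℝ G q v = fderiv ℝ α q v := by
    intro v
    erw [hG, fderiv_const_add]; rfl
  have hP : pderivP (fun q' => G q' * Ψ q') i q
      = G q * pderivP Ψ i q + pderivP α i q * Ψ q := by
    erw [pderivP, fderiv_mul_apply G Ψ hGdiff hΨdiff, hGd, pderivP, pderivP]; rfl
  have hX : pderivX (fun q' => G q' * Ψ q') i q
      = G q * pderivX Ψ i q + pderivX α i q * Ψ q := by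
    erw [pderivX, fderiv_mul_apply G Ψ hGdiff hΨdiff, hGd, pderivX, pderivX]; rfl
  -- key algebraic identity
  have key : pderivP α i q - aL • pderivX α i q = G q * AL - AtL * G q := by
    have telescope : lam • AtL - lam • AL
        = aL • pderivX α i q + (α q * AL - AtL * α q) - pderivP α i q := by
      have e0 : lam • AtL - lam • AL
          = ∑ l ∈ Finset.range (M + 1), lam ^ (l + 1) • (At i l q - A i l q) := by
        rw [hAtL, hAL, Finset.smul_sum, Finset.smul_sum, ← Finset.sum_sub_distrib]
        refine Finset.sum_congr rfl fun l _ => ?_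
        rw [smul_smul, smul_smul, ← smul_sub, pow_succ']
      have e1 : ∑ l ∈ Finset.range (M + 1), lam ^ (l + 1) • (At i l q - A i l q)
          = ∑ l ∈ Finset.range (M + 1), lam ^ (l + 1) • (a i l • pderivX α i q)
            + ∑ l ∈ Finset.range M,
                lam ^ (l + 1) • (α q * A i (l + 1) q - At i (l + 1) q * α q) := by
        rw [Finset.sum_range_succ, Finset.sum_range_succ (fun l => lam ^ (l+1) • (a i l • pderivX α i q))]
        have hM : At i M q - A i M q = a i M • pderivX α i q := by
          rw [hii i q]; abel
        rw [hM]
        have hterm : ∀ l ∈ Finset.range M, lam ^ (l + 1) • (At i l q - A i l q)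
            = lam ^ (l + 1) • (a i l • pderivX α i q)
              + lam ^ (l + 1) • (α q * A i (l + 1) q - At i (l + 1) q * α q) := by
          intro l hl
          have hl' := Finset.mem_range.mp hl
          have h := hiii i (l + 1) (Nat.le_add_left 1 l) hl' q
          simp only [Nat.add_sub_cancel] at h
          rw [show At i l q - A i l q
              = a i l • pderivX α i q + (α q * A i (l + 1) q - At i (l + 1) q * α q) by
            rw [h]; abel, smul_add]
        rw [Finset.sum_congr rfl hterm, Finset.sum_add_distrib]
        abel
      have e2 : ∑ l ∈ Finset.range (M + 1), lam ^ (l + 1) • (a i l • pderivX α i q)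
          = aL • pderivX α i q := by
        rw [haL, Finset.sum_smul]
        refine Finset.sum_congr rfl fun l _ => ?_
        rw [smul_smul, mul_comm]
      have e3 : ∑ l ∈ Finset.range M,
            lam ^ (l + 1) • (α q * A i (l + 1) q - At i (l + 1) q * α q)
          = (α q * AL - AtL * α q) - pderivP α i q := by
        have e4 : ∑ l ∈ Finset.range (M + 1), lam ^ l • (α q * A i l q - At i l q * α q)
            = ∑ l ∈ Finset.range M,
                lam ^ (l + 1) • (α q * A i (l + 1) q - At i (l + 1) q * α q)
              + pderivP α i q := by
          rw [Finset.sum_range_succ']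
          congr 1
          rw [pow_zero, one_smul, hi i q]
        have e5 : ∑ l ∈ Finset.range (M + 1), lam ^ l • (α q * A i l q - At i l q * α q)
            = α q * AL - AtL * α q := by
          rw [hAL, hAtL, Finset.mul_sum, Finset.sum_mul, ← Finset.sum_sub_distrib]
          refine Finset.sum_congr rfl fun l _ => ?_
          rw [smul_sub, mul_smul_comm, smul_mul_assoc]
        rw [← e5, e4]; abel
      rw [e0, e1, e2, e3]; abel
    have hGmul : G q * AL = lam • AL + α q * AL := by
      rw [hG, add_mul, smul_mul_assoc, one_mul]
    have hmulG : AtL * G q = lam • AtL + AtL * α q := by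
      rw [hG, mul_add, mul_smul_comm, mul_one]
    rw [hGmul, hmulG]
    have := telescope
    -- rearrange
    have goal' : pderivP α i q - aL • pderivX α i q
        = lam • AL + α q * AL - (lam • AtL + AtL * α q) := by
      have h2 : lam • AL + α q * AL - (lam • AtL + AtL * α q)
          = (α q * AL - AtL * α q) - (lam • AtL - lam • AL) := by abel
      rw [h2, this]; abel
    exact goal'
  -- final assembly
  rw [hP, hX, smul_add]
  have e1 : aL • (G q * pderivX Ψ i q) = G q * (aL • pderivX Ψ i q) :=
    (mul_smul_comm aL (G q) (pderivX Ψ i q)).symm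
  have e2 : aL • (pderivX α i q * Ψ q) = (aL • pderivX α i q) * Ψ q :=
    (smul_mul_assoc aL (pderivX α i q) (Ψ q)).symm
  rw [e1, e2]
  have lhs_eq : G q * pderivP Ψ i q + pderivP α i q * Ψ q
      - (G q * (aL • pderivX Ψ i q) + (aL • pderivX α i q) * Ψ q)
      = G q * (pderivP Ψ i q - aL • pderivX Ψ i q)
        + (pderivP α i q - aL • pderivX α i q) * Ψ q := by
    rw [mul_sub, sub_mul]; abel
  rw [lhs_eq, hΨ i q, key]
  have hfin : ∀ (Gq ALq AtLq Pq : Matrix (Fin N) (Fin N) ℝ),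
      Gq * -(ALq * Pq) + (Gq * ALq - AtLq * Gq) * Pq = -(AtLq * (Gq * Pq)) := by
    intros; noncomm_ring
  exact hfin (G q) AL AtL (Ψ q)
end

section
/- Let α : ℝ^n × ℝ^n → M_N(ℝ) be differentiable and let Ã_{il} : ℝ^n × ℝ^n → M_N(ℝ) (1 ≤ i ≤ n, 0 ≤ l ≤ M) be given. Suppose that for every λ ∈ ℝ there is a differentiable Ψ_λ : ℝ^n × ℝ^n → M_N(ℝ) with Ψ_λ(p,x) invertible for all (p,x), such that Ψ_λ satisfies ∂Ψ_λ/∂p_i − a_i(λ) ∂Ψ_λ/∂x_i = −A_i(λ)Ψ_λ and Ψ̃_λ := (λI + α)Ψ_λ satisfies ∂Ψ̃_λ/∂p_i − a_i(λ) ∂Ψ̃_λ/∂x_i = −Ã_i(λ)Ψ̃_λ for all 1 ≤ i ≤ n, where Ã_i(λ) = Σ_{l=0}^{M} Ã_{il} λ^{l}. Then for every 1 ≤ i ≤ n and every (p,x): (i) ∂α/∂p_i = α A_{i0} − Ã_{i0} α; (ii) Ã_{iM} = A_{iM} + a_{iM} ∂α/∂x_i; (iii) Ã_{i,m−1} = A_{i,m−1}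 + a_{i,m−1} ∂α/∂x_i + α A_{im} − Ã_{im} α for all 1 ≤ m ≤ M. -/
open Finset

attribute [local instance] Matrix.linftyOpNormedAddCommGroup Matrix.linftyOpNormedSpace

attribute [local instance] Matrix.linftyOpNormedRing Matrix.linftyOpNormedAlgebra

lemma poly_aux (d : ℕ) (c : ℕ → ℝ) (h : ∀ x : ℝ, ∑ j ∈ range (d+1), x ^ j * c j = 0) :
    ∀ j ≤ d, c j = 0 := by
  intro j hj
  have hp : (∑ j ∈ range (d+1), Polynomial.C (c j) * Polynomial.X ^ j : Polynomial ℝ) = 0 := by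
    apply Polynomial.funext
    intro x
    rw [Polynomial.eval_finset_sum]
    simp only [Polynomial.eval_mul, Polynomial.eval_C, Polynomial.eval_pow, Polynomial.eval_X,
      Polynomial.eval_zero]
    simpa [mul_comm] using h x
  have := congrArg (fun p => Polynomial.coeff p j) hp
  simpa [Polynomial.finset_sum_coeff, Polynomial.coeff_C_mul, Polynomial.coeff_X_pow,
    Finset.sum_ite_eq' (range (d+1)) j, Nat.lt_succ_of_le hj] using this

lemma mat_aux {N : ℕ} (d : ℕ) (C : ℕ → Matrix (Fin N) (Fin N) ℝ)
    (h : ∀ x : ℝ, ∑ j ∈ range (d+1), x ^ j • C j = 0) : ∀ j ≤ d, C j = 0 := by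
  intro j hj
  ext a b
  refine poly_aux d (fun j => C j a b) (fun x => ?_) j hj
  have := congrFun (congrFun (h x) a) b
  simpa [Matrix.sum_apply] using this

lemma pd_mul {n N : ℕ} (f g : (Fin n → ℝ) × (Fin n → ℝ) → Matrix (Fin N) (Fin N) ℝ)
    (hf : Differentiable ℝ f) (hg : Differentiable ℝ g) (i : Fin n) (q : (Fin n → ℝ) × (Fin n → ℝ)) :
    pderivP (fun q' => f q' * g q') i q = f q * pderivP g i q + pderivP f i q * g q ∧
    pderivX (fun q' => f q' * g q') i q = f q * pderivX g i q + pderivX f i q * g q := by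
  constructor <;> · simp only [pderivP, pderivX]
                    rw [fderiv_fun_mul' (hf q) (hg q)]
                    simp [smul_eq_mul]


theorem stmt_5 (n N M : ℕ) (hn : 2 ≤ n) (hN : 2 ≤ N)
    (a : Fin n → ℕ → ℝ)
    (A : Fin n → ℕ → ((Fin n → ℝ) × (Fin n → ℝ)) → Matrix (Fin N) (Fin N) ℝ)
    (hA : ∀ i l, l ≤ M → Differentiable ℝ (A i l))
    (α : ((Fin n → ℝ) × (Fin n → ℝ)) → Matrix (Fin N) (Fin N) ℝ)
    (hα : Differentiable ℝ α)
    (At : Fin n → ℕ → ((Fin n → ℝ) × (Fin n → ℝ)) → Matrix (Fin N) (Fin N) ℝ)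
    (hcov : ∀ lam : ℝ, ∃ Ψ : ((Fin n → ℝ) × (Fin n → ℝ)) → Matrix (Fin N) (Fin N) ℝ,
      Differentiable ℝ Ψ ∧ (∀ q, IsUnit (Ψ q)) ∧
      (∀ (i : Fin n) q,
        pderivP Ψ i q - (∑ k ∈ Finset.range (M + 1), a i k * lam ^ (k + 1)) • pderivX Ψ i q
          = -((∑ l ∈ Finset.range (M + 1), lam ^ l • A i l q) * Ψ q)) ∧
      (∀ (i : Fin n) q,
        pderivP (fun q' => (lam • (1 : Matrix (Fin N) (Fin N) ℝ) + α q') * Ψ q') i q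
          - (∑ k ∈ Finset.range (M + 1), a i k * lam ^ (k + 1)) •
              pderivX (fun q' => (lam • (1 : Matrix (Fin N) (Fin N) ℝ) + α q') * Ψ q') i q
        = -((∑ l ∈ Finset.range (M + 1), lam ^ l • At i l q) *
            ((lam • (1 : Matrix (Fin N) (Fin N) ℝ) + α q) * Ψ q)))) :
    (∀ (i : Fin n) q, pderivP α i q = α q * A i 0 q - At i 0 q * α q) ∧
    (∀ (i : Fin n) q, At i M q = A i M q + a i M • pderivX α i q) ∧
    (∀ (i : Fin n) (m : ℕ), 1 ≤ m → m ≤ M → ∀ q,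
      At i (m - 1) q =
        A i (m - 1) q + a i (m - 1) • pderivX α i q + α q * A i m q - At i m q * α q) := by
  -- master claim: all polynomial coefficients vanish
  have master : ∀ (i : Fin n) (q : (Fin n → ℝ) × (Fin n → ℝ)), ∀ j ≤ M + 1,
      ((if j = 0 then pderivP α i q
        else (-(a i (j-1)) • pderivX α i q + At i (j-1) q - A i (j-1) q))
       + (if j ≤ M then At i j q * α q - α q * A i j q else 0)) = 0 := by
    intro i q
    set Cm : ℕ → Matrix (Fin N) (Fin N) ℝ := fun j =>
      (if j = 0 then pderivP α i q
        else (-(a i (j-1)) • pderivX α i q + At i (j-1) q - A i (j-1) q))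
       + (if j ≤ M then At i j q * α q - α q * A i j q else 0) with hCm
    refine mat_aux (M+1) Cm ?_
    intro lam
    obtain ⟨Ψ, hΨd, hu, h1, h2⟩ := hcov lam
    set s : ℝ := ∑ k ∈ range (M + 1), a i k * lam ^ (k + 1) with hs
    set Al : Matrix (Fin N) (Fin N) ℝ := ∑ l ∈ range (M + 1), lam ^ l • A i l q with hAl
    set Atl : Matrix (Fin N) (Fin N) ℝ := ∑ l ∈ range (M + 1), lam ^ l • At i l q with hAtl
    set B : Matrix (Fin N) (Fin N) ℝ := lam • (1 : Matrix (Fin N) (Fin N) ℝ) + α q with hB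
    have hf : Differentiable ℝ (fun q' => lam • (1 : Matrix (Fin N) (Fin N) ℝ) + α q') :=
      hα.const_add _
    have hPf : pderivP (fun q' => lam • (1 : Matrix (Fin N) (Fin N) ℝ) + α q') i q
        = pderivP α i q := by
      simp only [pderivP]; rw [fderiv_const_add]
    have hXf : pderivX (fun q' => lam • (1 : Matrix (Fin N) (Fin N) ℝ) + α q') i q
        = pderivX α i q := by
      simp only [pderivX]; rw [fderiv_const_add]
    have e2 := h2 i q
    rw [(pd_mul _ Ψ hf hΨd i q).1, (pd_mul _ Ψ hf hΨd i q).2, hPf, hXf] at e2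
    -- e2 : B * ∂pΨ + ∂pα * Ψ - s • (B * ∂xΨ + ∂xα * Ψ) = -(Atl * (B * Ψ))
    have e1' := congrArg (fun X => B * X) (h1 i q)
    simp only [mul_sub, mul_smul_comm, mul_neg] at e1'
    -- e1' : B * ∂pΨ - s • (B * ∂xΨ) = -(B * (Al * Ψ))
    have key : (pderivP α i q - s • pderivX α i q + Atl * B - B * Al) * Ψ q = 0 := by
      have comb : (pderivP α i q - s • pderivX α i q + Atl * B - B * Al) * Ψ q
          = ((B * pderivP Ψ i q + pderivP α i q * Ψ q)
              - s • (B * pderivX Ψ i q + pderivX α i q * Ψ q))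
            - (B * pderivP Ψ i q - s • (B * pderivX Ψ i q))
            + Atl * (B * Ψ q) - B * (Al * Ψ q) := by
        simp only [sub_mul, add_mul, smul_mul_assoc, mul_assoc, smul_add]
        abel
      rw [comb, e2, e1']
      abel
    obtain ⟨u, hu⟩ := hu q
    rw [← hu] at key
    have hD := (Units.mul_left_eq_zero u).mp key
    -- now show the coefficient sum equals D
    have expand : ∑ j ∈ range (M + 1 + 1), lam ^ j • Cm j
        = pderivP α i q - s • pderivX α i q + Atl * B - B * Al := by
      have hsplit : ∑ j ∈ range (M + 1 + 1), lam ^ j • Cm j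
          = (∑ j ∈ range (M + 1 + 1), lam ^ j •
              (if j = 0 then pderivP α i q
                else (-(a i (j-1)) • pderivX α i q + At i (j-1) q - A i (j-1) q)))
            + ∑ j ∈ range (M + 1 + 1), lam ^ j •
              (if j ≤ M then At i j q * α q - α q * A i j q else 0) := by
        rw [← Finset.sum_add_distrib]
        exact Finset.sum_congr rfl fun j _ => by rw [hCm, smul_add]
      rw [hsplit]
      have hG : ∑ j ∈ range (M + 1 + 1), lam ^ j •
            (if j ≤ M then At i j q * α q - α q * A i j q else 0)
          = Atl * α q - α q * Al := by
        rw [Finset.sum_range_succ, if_neg (by omega), smul_zero, add_zero]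
        have : ∀ j ∈ range (M + 1), lam ^ j •
              (if j ≤ M then At i j q * α q - α q * A i j q else 0)
            = lam ^ j • At i j q * α q - α q * (lam ^ j • A i j q) := by
          intro j hj
          rw [if_pos (by simpa [Nat.lt_succ_iff] using hj)]
          rw [smul_sub, smul_mul_assoc, mul_smul_comm]
        rw [Finset.sum_congr rfl this, Finset.sum_sub_distrib, ← Finset.sum_mul,
          ← Finset.mul_sum, hAtl, hAl]
      have hF : ∑ j ∈ range (M + 1 + 1), lam ^ j •
            (if j = 0 then pderivP α i q
              else (-(a i (j-1)) • pderivX α i q + At i (j-1) q - A i (j-1) q))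
          = pderivP α i q - s • pderivX α i q + lam • Atl - lam • Al := by
        rw [Finset.sum_range_succ']
        simp only [Nat.succ_ne_zero, if_false, if_true, eq_self_iff_true, pow_zero, one_smul,
          Nat.add_sub_cancel]
        have hterm : ∀ k ∈ range (M + 1), lam ^ (k + 1) •
              (-(a i k) • pderivX α i q + At i k q - A i k q)
            = -((a i k * lam ^ (k+1)) • pderivX α i q)
              + lam • (lam ^ k • At i k q) - lam • (lam ^ k • A i k q) := by
          intro k hk
          module
        rw [Finset.sum_congr rfl hterm]
        rw [Finset.sum_sub_distrib, Finset.sum_add_distrib, ← Finset.smul_sum, ← Finset.smul_sum,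
          Finset.sum_neg_distrib, ← Finset.sum_smul, ← hAtl, ← hAl, ← hs]
        abel
      rw [hG, hF, hB]
      rw [mul_add, add_mul, mul_smul_comm, smul_mul_assoc, mul_one, one_mul]
      abel
    rw [expand]
    exact hD
  refine ⟨?_, ?_, ?_⟩
  · intro i q
    have h0 := master i q 0 (by omega)
    rw [if_pos rfl, if_pos (Nat.zero_le M)] at h0
    rw [eq_neg_of_add_eq_zero_left h0, neg_sub]
  · intro i q
    have h1 := master i q (M+1) le_rfl
    rw [if_neg (Nat.succ_ne_zero M), if_neg (by omega), add_zero, Nat.add_sub_cancel] at h1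
    have : At i M q - (A i M q + a i M • pderivX α i q)
        = -(a i M) • pderivX α i q + At i M q - A i M q := by
      rw [neg_smul]; abel
    exact sub_eq_zero.mp (this.trans h1)
  · intro i m hm1 hmM q
    have hc := master i q m (by omega)
    rw [if_neg (by omega), if_pos hmM] at hc
    have : At i (m-1) q - (A i (m-1) q + a i (m-1) • pderivX α i q + α q * A i m q
            - At i m q * α q)
        = (-(a i (m-1)) • pderivX α i q + At i (m-1) q - A i (m-1) q)
          + (At i m q * α q - α q * A i m q) := by
      rw [neg_smul]; abel
    exact sub_eq_zero.mp (this.trans hc)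
end

section
/- Suppose the potentials A_{il} are continuously differentiable and that for every λ ∈ ℝ there exists a twice continuously differentiable Ψ_λ : ℝ^n × ℝ^n → M_N(ℝ), invertible at every point, satisfying ∂Ψ_λ/∂p_i − a_i(λ) ∂Ψ_λ/∂x_i = −A_i(λ)Ψ_λ for all 1 ≤ i ≤ n. Then for all 1 ≤ i, j ≤ n and all (p,x) the following Lax integrable system holds: [A_{i0},A_{j0}] − ∂A_{i0}/∂p_j + ∂A_{j0}/∂p_i = 0; for 1 ≤ m ≤ M: Σ_{k+l=m, 0≤k,l≤M} [A_{ik},A_{jl}] − ∂A_{im}/∂p_j + ∂A_{jm}/∂p_i + Σ_{k+l=m−1, 0≤k,l≤M} (a_{jk} ∂A_{il}/∂x_j − a_{ik} ∂A_{jl}/∂x_i) = 0; for M+1 ≤ m ≤ 2M: Σ_{k+l=m, 0≤k,l≤M} [A_{ik},A_{jl}] + Σ_{k+l=m−1, 0≤k,l≤M} (a_{jk} ∂A_{il}/∂x_j − a_{ik} ∂A_{jl}/∂x_i) = 0; and a_{jM} ∂A_{iM}/∂x_j − a_{iM} ∂A_{jM}/∂x_i = 0. -/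
open Finset

attribute [local instance] Matrix.linftyOpNormedAddCommGroup Matrix.linftyOpNormedSpace

attribute [local instance] Matrix.linftyOpNormedRing Matrix.linftyOpNormedAlgebra

/-- Zero-curvature identity for the λ-dependent connection, from existence of an invertible
solution `Ψ`. -/
lemma aux_key {n N : ℕ}
    (B : Fin n → ((Fin n → ℝ) × (Fin n → ℝ)) → Matrix (Fin N) (Fin N) ℝ)
    (hB : ∀ i, Differentiable ℝ (B i))
    (Ψ : ((Fin n → ℝ) × (Fin n → ℝ)) → Matrix (Fin N) (Fin N) ℝ)
    (hΨ : ContDiff ℝ 2 Ψ) (hu : ∀ q, IsUnit (Ψ q))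
    (v : Fin n → ((Fin n → ℝ) × (Fin n → ℝ)))
    (h : ∀ i q, fderiv ℝ Ψ q (v i) = -(B i q * Ψ q))
    (i j : Fin n) (q : (Fin n → ℝ) × (Fin n → ℝ)) :
    B i q * B j q - B j q * B i q
      - fderiv ℝ (B i) q (v j) + fderiv ℝ (B j) q (v i) = 0 := by
  have hΨd : Differentiable ℝ Ψ := hΨ.differentiable (by norm_num)
  letI : NormedAddCommGroup ((Fin n → ℝ) × (Fin n → ℝ) →L[ℝ] Matrix (Fin N) (Fin N) ℝ) :=
    @ContinuousLinearMap.toNormedAddCommGroup ℝ ℝ _ (Matrix (Fin N) (Fin N) ℝ) _ _ _ _ _ _ (RingHom.id ℝ) _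
  letI : NormedSpace ℝ ((Fin n → ℝ) × (Fin n → ℝ) →L[ℝ] Matrix (Fin N) (Fin N) ℝ) :=
    ContinuousLinearMap.toNormedSpace (σ₁₂ := RingHom.id ℝ) (𝕜' := ℝ)
  have hfd1 : ContDiff ℝ 1 (fderiv ℝ Ψ) := hΨ.fderiv_right (by norm_num)
  have hH : HasFDerivAt (fderiv ℝ Ψ) (fderiv ℝ (fderiv ℝ Ψ) q) q :=
    (hfd1.differentiable one_ne_zero q).hasFDerivAt
  set H := fderiv ℝ (fderiv ℝ Ψ) q with hHdef
  have hder : ∀ i' : Fin n,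
      (ContinuousLinearMap.apply ℝ (Matrix (Fin N) (Fin N) ℝ) (v i')).comp H
        = -(B i' q • (fderiv ℝ Ψ q) + (fderiv ℝ (B i') q).smulRight (Ψ q)) := by
    intro i'
    have h1 : HasFDerivAt (fun q' => fderiv ℝ Ψ q' (v i'))
        ((ContinuousLinearMap.apply ℝ (Matrix (Fin N) (Fin N) ℝ) (v i')).comp H) q :=
      (ContinuousLinearMap.apply ℝ (Matrix (Fin N) (Fin N) ℝ) (v i')).hasFDerivAt.comp q hH
    have h2 : HasFDerivAt (fun q' => -(B i' q' * Ψ q'))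
        (-(B i' q • (fderiv ℝ Ψ q) + (fderiv ℝ (B i') q).smulRight (Ψ q))) q :=
      (((hB i' q).hasFDerivAt.mul' (hΨd q).hasFDerivAt)).neg
    have hfe : (fun q' => fderiv ℝ Ψ q' (v i')) = (fun q' => -(B i' q' * Ψ q')) :=
      funext fun q' => h i' q'
    rw [← hfe] at h2
    exact h1.unique h2
  have hsymm : H (v j) (v i) = H (v i) (v j) :=
    (hΨ.contDiffAt.isSymmSndFDerivAt (by norm_num)) (v j) (v i)
  have e1 : H (v j) (v i)
      = -(B i q * (-(B j q * Ψ q)) + fderiv ℝ (B i) q (v j) * Ψ q) := by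
    have := congrFun (congrArg DFunLike.coe (hder i)) (v j)
    change H (v j) (v i) = -(B i q • fderiv ℝ Ψ q (v j) + fderiv ℝ (B i) q (v j) • Ψ q) at this
    rw [this, h j q]
    rfl
  have e2 : H (v i) (v j)
      = -(B j q * (-(B i q * Ψ q)) + fderiv ℝ (B j) q (v i) * Ψ q) := by
    have := congrFun (congrArg DFunLike.coe (hder j)) (v i)
    change H (v i) (v j) = -(B j q • fderiv ℝ Ψ q (v i) + fderiv ℝ (B j) q (v i) • Ψ q) at this
    rw [this, h i q]
    rfl
  have key : (B i q * B j q - B j q * B i q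
      - fderiv ℝ (B i) q (v j) + fderiv ℝ (B j) q (v i)) * Ψ q = 0 := by
    have := e1.symm.trans (hsymm.trans e2)
    have h' : B i q * (B j q * Ψ q) - fderiv ℝ (B i) q (v j) * Ψ q
        = B j q * (B i q * Ψ q) - fderiv ℝ (B j) q (v i) * Ψ q := by
      rw [← sub_eq_zero] at this ⊢
      rw [← this]
      noncomm_ring
    noncomm_ring
    rw [← mul_assoc, ← mul_assoc] at h'
    linear_combination (norm := noncomm_ring) h'
  obtain ⟨u, hu'⟩ := hu q
  rw [← hu'] at key
  exact (Units.mul_left_eq_zero u).mp key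

/-- Extracting coefficients of a matrix-valued polynomial identity. -/
lemma aux_coeff {N K : ℕ} (c : ℕ → Matrix (Fin N) (Fin N) ℝ)
    (h : ∀ lam : ℝ, ∑ m ∈ range K, lam ^ m • c m = 0) :
    ∀ m, m < K → c m = 0 := by
  intro m hm
  ext r s
  have h' : ∀ lam : ℝ, ∑ m ∈ range K, (c m r s) * lam ^ m = 0 := by
    intro lam
    simpa [Finset.sum_apply, Matrix.sum_apply, Matrix.smul_apply, smul_eq_mul,
      mul_comm] using congrFun (congrFun (h lam) r) s
  have hp : (∑ m ∈ range K, Polynomial.C (c m r s) * Polynomial.X ^ m : Polynomial ℝ) = 0 := by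
    apply Polynomial.funext
    intro lam
    simpa [Polynomial.eval_finset_sum] using h' lam
  have := congrArg (fun p => Polynomial.coeff p m) hp
  simpa [Polynomial.finset_sum_coeff, Polynomial.coeff_C_mul, Polynomial.coeff_X_pow,
    Finset.sum_ite_eq, hm] using this

/-- The coefficient of `λ^m` in the curvature of the λ-dependent connection. -/
noncomputable def auxC {n N : ℕ} (M : ℕ) (a : Fin n → ℕ → ℝ)
    (A : Fin n → ℕ → ((Fin n → ℝ) × (Fin n → ℝ)) → Matrix (Fin N) (Fin N) ℝ)
    (i j : Fin n) (q : (Fin n → ℝ) × (Fin n → ℝ)) (m : ℕ) : Matrix (Fin N) (Fin N) ℝ :=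
  (∑ kl ∈ (Finset.range (M + 1) ×ˢ Finset.range (M + 1)).filter
      (fun kl => kl.1 + kl.2 = m),
    (A i kl.1 q * A j kl.2 q - A j kl.2 q * A i kl.1 q))
  - (if m < M + 1 then pderivP (A i m) j q else 0)
  + (if m < M + 1 then pderivP (A j m) i q else 0)
  + (∑ kl ∈ (Finset.range (M + 1) ×ˢ Finset.range (M + 1)).filter
      (fun kl => kl.1 + kl.2 + 1 = m),
    (a j kl.1 • pderivX (A i kl.2) j q - a i kl.1 • pderivX (A j kl.2) i q))

theorem stmt_6 (n N M : ℕ) (hn : 2 ≤ n) (hN : 2 ≤ N)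
    (a : Fin n → ℕ → ℝ)
    (A : Fin n → ℕ → ((Fin n → ℝ) × (Fin n → ℝ)) → Matrix (Fin N) (Fin N) ℝ)
    (hA : ∀ i l, l ≤ M → ContDiff ℝ 1 (A i l))
    (hcompat : ∀ lam : ℝ, ∃ Ψ : ((Fin n → ℝ) × (Fin n → ℝ)) → Matrix (Fin N) (Fin N) ℝ,
      ContDiff ℝ 2 Ψ ∧ (∀ q, IsUnit (Ψ q)) ∧
      (∀ (i : Fin n) q,
        pderivP Ψ i q - (∑ k ∈ Finset.range (M + 1), a i k * lam ^ (k + 1)) • pderivX Ψ i q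
          = -((∑ l ∈ Finset.range (M + 1), lam ^ l • A i l q) * Ψ q))) :
    ∀ (i j : Fin n) q,
      ((A i 0 q * A j 0 q - A j 0 q * A i 0 q)
          - pderivP (A i 0) j q + pderivP (A j 0) i q = 0) ∧
      (∀ m : ℕ, 1 ≤ m → m ≤ M →
        (∑ kl ∈ (Finset.range (M + 1) ×ˢ Finset.range (M + 1)).filter
            (fun kl => kl.1 + kl.2 = m),
          (A i kl.1 q * A j kl.2 q - A j kl.2 q * A i kl.1 q))
          - pderivP (A i m) j q + pderivP (A j m) i q
          + (∑ kl ∈ (Finset.range (M + 1) ×ˢ Finset.range (M + 1)).filter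
              (fun kl => kl.1 + kl.2 = m - 1),
            (a j kl.1 • pderivX (A i kl.2) j q - a i kl.1 • pderivX (A j kl.2) i q)) = 0) ∧
      (∀ m : ℕ, M + 1 ≤ m → m ≤ 2 * M →
        (∑ kl ∈ (Finset.range (M + 1) ×ˢ Finset.range (M + 1)).filter
            (fun kl => kl.1 + kl.2 = m),
          (A i kl.1 q * A j kl.2 q - A j kl.2 q * A i kl.1 q))
          + (∑ kl ∈ (Finset.range (M + 1) ×ˢ Finset.range (M + 1)).filter
              (fun kl => kl.1 + kl.2 = m - 1),
            (a j kl.1 • pderivX (A i kl.2) j q - a i kl.1 • pderivX (A j kl.2) i q)) = 0) ∧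
      (a j M • pderivX (A i M) j q - a i M • pderivX (A j M) i q = 0) := by
  intro i j q
  have key : ∀ lam : ℝ, ∑ m ∈ range (2 * M + 2), lam ^ m • auxC M a A i j q m = 0 := by
    intro lam
    obtain ⟨Ψ, hΨ2, hunit, heq⟩ := hcompat lam
    set b : Fin n → ℝ := fun i' => ∑ k ∈ range (M + 1), a i' k * lam ^ (k + 1) with hbdef
    set B : Fin n → ((Fin n → ℝ) × (Fin n → ℝ)) → Matrix (Fin N) (Fin N) ℝ :=
      fun i' q' => ∑ l ∈ range (M + 1), lam ^ l • A i' l q' with hBdef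
    set v : Fin n → (Fin n → ℝ) × (Fin n → ℝ) :=
      fun i' => ((Pi.single i' 1, 0) : (Fin n → ℝ) × (Fin n → ℝ))
        - b i' • ((0, Pi.single i' 1) : (Fin n → ℝ) × (Fin n → ℝ)) with hvdef
    have hAd : ∀ (i' : Fin n) l, l ∈ range (M + 1) → Differentiable ℝ (A i' l) :=
      fun i' l hl =>
        (hA i' l (Nat.lt_succ_iff.mp (mem_range.mp hl))).differentiable one_ne_zero
    have hBdiff : ∀ i', Differentiable ℝ (B i') := fun i' =>
      Differentiable.fun_sum fun l hl => (hAd i' l hl).fun_const_smul _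
    have hΨ' : ∀ i' q', fderiv ℝ Ψ q' (v i') = -(B i' q' * Ψ q') := by
      intro i' q'
      have h := heq i' q'
      simp only [pderivP, pderivX] at h
      show fderiv ℝ Ψ q' (_ - b i' • _) = _
      rw [map_sub, map_smul]
      exact h
    have hkey := aux_key B hBdiff Ψ hΨ2 hunit v hΨ' i j q
    -- expand the products
    have hmul : ∀ i' j' : Fin n, B i' q * B j' q
        = ∑ kl ∈ range (M + 1) ×ˢ range (M + 1),
            lam ^ (kl.1 + kl.2) • (A i' kl.1 q * A j' kl.2 q) := by
      intro i' j'
      rw [Finset.sum_product]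
      show (∑ k ∈ range (M + 1), lam ^ k • A i' k q) * (∑ l ∈ range (M + 1), lam ^ l • A j' l q) = _
      rw [Finset.sum_mul_sum]
      exact Finset.sum_congr rfl fun k _ => Finset.sum_congr rfl fun l _ => by
        rw [smul_mul_assoc, mul_smul_comm, smul_smul, pow_add]
    -- expand the directional derivatives of B
    have hfB : ∀ i' j' : Fin n, fderiv ℝ (B i') q (v j') =
        (∑ m ∈ range (M + 1), lam ^ m • pderivP (A i' m) j' q)
        - ∑ kl ∈ range (M + 1) ×ˢ range (M + 1),
            lam ^ (kl.1 + kl.2 + 1) • (a j' kl.1 • pderivX (A i' kl.2) j' q) := by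
      intro i' j'
      have h1 : fderiv ℝ (B i') q = ∑ l ∈ range (M + 1), lam ^ l • fderiv ℝ (A i' l) q := by
        rw [hBdef]
        beta_reduce
        erw [fderiv_fun_sum (fun l hl => ((hAd i' l hl) q).fun_const_smul (lam ^ l))]
        exact Finset.sum_congr rfl fun l hl => fderiv_fun_const_smul ((hAd i' l hl) q) _
      have step1 : fderiv ℝ (B i') q (v j')
          = ∑ l ∈ range (M + 1), lam ^ l • (fderiv ℝ (A i' l) q (v j')) := by
        rw [h1, ContinuousLinearMap.sum_apply]
        exact Finset.sum_congr rfl fun l _ => rfl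
      rw [step1]
      have step2 : ∀ l, fderiv ℝ (A i' l) q (v j')
          = pderivP (A i' l) j' q - b j' • pderivX (A i' l) j' q := by
        intro l
        show fderiv ℝ (A i' l) q (_ - b j' • _) = _
        rw [map_sub, map_smul]
        rfl
      calc ∑ l ∈ range (M + 1), lam ^ l • (fderiv ℝ (A i' l) q (v j'))
          = (∑ l ∈ range (M + 1), lam ^ l • pderivP (A i' l) j' q)
            - ∑ l ∈ range (M + 1), ∑ k ∈ range (M + 1),
                lam ^ (k + l + 1) • (a j' k • pderivX (A i' l) j' q) := by
            rw [← Finset.sum_sub_distrib]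
            refine Finset.sum_congr rfl fun l _ => ?_
            rw [step2 l, smul_sub]
            congr 1
            rw [hbdef]
            show lam ^ l • ((∑ k ∈ range (M + 1), a j' k * lam ^ (k + 1))
              • pderivX (A i' l) j' q) = _
            rw [Finset.sum_smul, Finset.smul_sum]
            refine Finset.sum_congr rfl fun k _ => ?_
            rw [smul_smul, smul_smul]
            congr 1
            ring
        _ = (∑ m ∈ range (M + 1), lam ^ m • pderivP (A i' m) j' q)
            - ∑ kl ∈ range (M + 1) ×ˢ range (M + 1),
                lam ^ (kl.1 + kl.2 + 1) • (a j' kl.1 • pderivX (A i' kl.2) j' q) := by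
            congr 1
            rw [Finset.sum_product]
            exact Finset.sum_comm
    -- fiberwise regrouping
    have fiber : ∀ (T : ℕ × ℕ → Matrix (Fin N) (Fin N) ℝ) (g : ℕ × ℕ → ℕ),
        (∀ kl ∈ range (M + 1) ×ˢ range (M + 1), g kl ∈ range (2 * M + 2)) →
        ∑ m ∈ range (2 * M + 2), lam ^ m •
            (∑ kl ∈ (range (M + 1) ×ˢ range (M + 1)).filter (fun kl => g kl = m), T kl)
          = ∑ kl ∈ range (M + 1) ×ˢ range (M + 1), lam ^ (g kl) • T kl := by
      intro T g hg
      rw [← Finset.sum_fiberwise_of_maps_to hg (fun kl => lam ^ (g kl) • T kl)]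
      refine Finset.sum_congr rfl fun m _ => ?_
      rw [Finset.smul_sum]
      exact Finset.sum_congr rfl fun kl hkl => by rw [(Finset.mem_filter.mp hkl).2]
    have hsubrange : range (M + 1) ⊆ range (2 * M + 2) := by
      intro x hx; simp only [mem_range] at *; omega
    have ite_sum : ∀ (Z : ℕ → Matrix (Fin N) (Fin N) ℝ),
        ∑ m ∈ range (2 * M + 2), lam ^ m • (if m < M + 1 then Z m else 0)
          = ∑ m ∈ range (M + 1), lam ^ m • Z m := by
      intro Z
      rw [← Finset.sum_subset hsubrange
        (fun x _ hx => by rw [if_neg (by simpa using hx), smul_zero])]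
      exact Finset.sum_congr rfl fun m hm => by rw [if_pos (mem_range.mp hm)]
    -- index swap for the second product
    have hswap : ∑ kl ∈ range (M + 1) ×ˢ range (M + 1),
          lam ^ (kl.1 + kl.2) • (A j kl.1 q * A i kl.2 q)
        = ∑ kl ∈ range (M + 1) ×ˢ range (M + 1),
          lam ^ (kl.1 + kl.2) • (A j kl.2 q * A i kl.1 q) := by
      rw [Finset.sum_product, Finset.sum_product, Finset.sum_comm]
      exact Finset.sum_congr rfl fun l _ => Finset.sum_congr rfl fun k _ => by
        rw [add_comm]
    -- assemble
    simp only [auxC, smul_sub, smul_add, Finset.sum_sub_distrib, Finset.sum_add_distrib]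
    have hg1 : ∀ kl ∈ range (M + 1) ×ˢ range (M + 1), kl.1 + kl.2 ∈ range (2 * M + 2) := by
      intro kl hkl
      simp only [mem_product, mem_range] at hkl ⊢; omega
    have hg2 : ∀ kl ∈ range (M + 1) ×ˢ range (M + 1), kl.1 + kl.2 + 1 ∈ range (2 * M + 2) := by
      intro kl hkl
      simp only [mem_product, mem_range] at hkl ⊢; omega
    rw [fiber _ (fun kl => kl.1 + kl.2) hg1, fiber _ (fun kl => kl.1 + kl.2) hg1,
      fiber _ (fun kl => kl.1 + kl.2 + 1) hg2, fiber _ (fun kl => kl.1 + kl.2 + 1) hg2,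
      ite_sum, ite_sum]
    rw [hmul i j, hmul j i, hfB i j, hfB j i, hswap] at hkey
    rw [← hkey]
    abel
  have hC : ∀ m, m < 2 * M + 2 → auxC M a A i j q m = 0 :=
    aux_coeff (auxC M a A i j q) key
  refine ⟨?_, ?_, ?_, ?_⟩
  · have h0 := hC 0 (by omega)
    have e1 : (range (M + 1) ×ˢ range (M + 1)).filter (fun kl => kl.1 + kl.2 = 0)
        = {((0 : ℕ), (0 : ℕ))} := by
      ext kl
      simp only [Finset.mem_filter, Finset.mem_product, Finset.mem_range,
        Finset.mem_singleton, Prod.ext_iff]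
      omega
    have e2 : (range (M + 1) ×ˢ range (M + 1)).filter (fun kl => kl.1 + kl.2 + 1 = 0)
        = ∅ := by
      ext kl
      simp only [Finset.mem_filter, Finset.mem_product, Finset.mem_range,
        Finset.notMem_empty, iff_false, not_and]
      omega
    have h01 : 0 < M + 1 := by omega
    rw [auxC, e1, e2, Finset.sum_singleton, Finset.sum_empty,
      if_pos h01, if_pos h01, add_zero] at h0
    simpa using h0
  · intro m hm1 hm2
    have h0 := hC m (by omega)
    have e3 : (range (M + 1) ×ˢ range (M + 1)).filter (fun kl => kl.1 + kl.2 + 1 = m)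
        = (range (M + 1) ×ˢ range (M + 1)).filter (fun kl => kl.1 + kl.2 = m - 1) :=
      Finset.filter_congr fun kl _ => by omega
    have hmlt : m < M + 1 := by omega
    rw [auxC, if_pos hmlt, if_pos hmlt, e3] at h0
    exact h0
  · intro m hm1 hm2
    have h0 := hC m (by omega)
    have e3 : (range (M + 1) ×ˢ range (M + 1)).filter (fun kl => kl.1 + kl.2 + 1 = m)
        = (range (M + 1) ×ˢ range (M + 1)).filter (fun kl => kl.1 + kl.2 = m - 1) :=
      Finset.filter_congr fun kl _ => by omega
    have hmlt : ¬ m < M + 1 := by omega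
    rw [auxC, if_neg hmlt, if_neg hmlt, e3, sub_zero, add_zero] at h0
    exact h0
  · have h0 := hC (2 * M + 1) (by omega)
    have e4 : (range (M + 1) ×ˢ range (M + 1)).filter (fun kl => kl.1 + kl.2 = 2 * M + 1)
        = ∅ := by
      ext kl
      simp only [Finset.mem_filter, Finset.mem_product, Finset.mem_range,
        Finset.notMem_empty, iff_false, not_and]
      omega
    have e5 : (range (M + 1) ×ˢ range (M + 1)).filter (fun kl => kl.1 + kl.2 + 1 = 2 * M + 1)
        = {(M, M)} := by
      ext kl
      simp only [Finset.mem_filter, Finset.mem_product, Finset.mem_range,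
        Finset.mem_singleton, Prod.ext_iff]
      omega
    have hmlt : ¬ 2 * M + 1 < M + 1 := by omega
    rw [auxC, e4, e5, Finset.sum_singleton, Finset.sum_empty,
      if_neg hmlt, if_neg hmlt, sub_zero, add_zero, zero_add] at h0
    simpa using h0
end

section
/- Let J : ℝ^n × ℝ^n → M_N(ℝ) be twice continuously differentiable with J(p,x) invertible for every (p,x), and define A_{i0} := −(∂J/∂p_i) J^{−1} for 1 ≤ i ≤ n. Then the Takasaki system, namely [A_{i0},A_{j0}] − ∂A_{i0}/∂p_j + ∂A_{j0}/∂p_i = 0 and ∂A_{i0}/∂x_j − ∂A_{j0}/∂x_i = 0 for all 1 ≤ i, j ≤ n, holds everywhere if and only if ∂/∂x_i((∂J/∂p_j) J^{−1}) − ∂/∂x_j((∂J/∂p_i) J^{−1}) = 0 for all 1 ≤ i, j ≤ n everywhere. (In particular the first family of equations holds automatically for this choice of A_{i0}.) -/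
open Finset

attribute [local instance] Matrix.linftyOpNormedAddCommGroup Matrix.linftyOpNormedSpace

section Aux

attribute [local instance] Matrix.linftyOpNormedRing Matrix.linftyOpNormedAlgebra

lemma key_stmt_7 {n N : ℕ}
    (J : ((Fin n → ℝ) × (Fin n → ℝ)) → Matrix (Fin N) (Fin N) ℝ)
    (hJ : ContDiff ℝ 2 J) (hJinv : ∀ q, IsUnit (J q))
    (v q : (Fin n → ℝ) × (Fin n → ℝ)) :
    ∃ L : ((Fin n → ℝ) × (Fin n → ℝ)) →L[ℝ] Matrix (Fin N) (Fin N) ℝ,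
      HasFDerivAt (fun q' => fderiv ℝ J q' v * (J q')⁻¹) L q ∧
      ∀ w, L w = fderiv ℝ (fderiv ℝ J) q w v * (J q)⁻¹
        - fderiv ℝ J q v * ((J q)⁻¹ * (fderiv ℝ J q w * (J q)⁻¹)) := by
  have hJd : Differentiable ℝ J := hJ.differentiable two_ne_zero
  have hJ1 := hJ.fderiv_right (m := 1) (by norm_num)
  have hH :=
    (hJ1.differentiable one_ne_zero q).hasFDerivAt
  have hu : HasFDerivAt (fun q' => fderiv ℝ J q' v)
      ((ContinuousLinearMap.apply ℝ (Matrix (Fin N) (Fin N) ℝ) v).comp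
        (fderiv ℝ (fderiv ℝ J) q)) q :=
    ((ContinuousLinearMap.apply ℝ (Matrix (Fin N) (Fin N) ℝ) v).hasFDerivAt).comp q hH
  have hginv : HasFDerivAt (fun q' => (J q')⁻¹)
      ((-ContinuousLinearMap.mulLeftRight ℝ (Matrix (Fin N) (Fin N) ℝ)
          (J q)⁻¹ (J q)⁻¹).comp (fderiv ℝ J q)) q := by
    have h1 : (fun q' => (J q')⁻¹) = fun q' => Ring.inverse (J q') := by
      funext q'; rw [Matrix.nonsing_inv_eq_ringInverse]
    rw [h1]
    have h2 := (hasFDerivAt_ringInverse (𝕜 := ℝ) (hJinv q).unit).comp q (hJd q).hasFDerivAt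
    have h3 : ((((hJinv q).unit⁻¹ : (Matrix (Fin N) (Fin N) ℝ)ˣ)) :
        Matrix (Fin N) (Fin N) ℝ) = (J q)⁻¹ := by
      rw [Matrix.coe_units_inv, (hJinv q).unit_spec]
    rw [h3] at h2
    exact h2
  refine ⟨_, hu.mul' hginv, fun w => ?_⟩
  have key : ∀ a b c d : Matrix (Fin N) (Fin N) ℝ,
      a * -(d * b * d) + c * d = c * d - a * (d * (b * d)) := by
    intros; noncomm_ring
  exact key (fderiv ℝ J q v) (fderiv ℝ J q w) (fderiv ℝ (fderiv ℝ J) q w v) (J q)⁻¹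

end Aux

theorem stmt_7 (n N : ℕ) (hn : 2 ≤ n) (hN : 2 ≤ N)
    (J : ((Fin n → ℝ) × (Fin n → ℝ)) → Matrix (Fin N) (Fin N) ℝ)
    (hJ : ContDiff ℝ 2 J) (hJinv : ∀ q, IsUnit (J q))
    (A : Fin n → ((Fin n → ℝ) × (Fin n → ℝ)) → Matrix (Fin N) (Fin N) ℝ)
    (hA : ∀ i q, A i q = -(pderivP J i q * (J q)⁻¹)) :
    ((∀ (i j : Fin n) q,
        ((A i q * A j q - A j q * A i q) - pderivP (A i) j q + pderivP (A j) i q = 0) ∧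
        (pderivX (A i) j q - pderivX (A j) i q = 0))
      ↔ (∀ (i j : Fin n) q,
          pderivX (fun q' => pderivP J j q' * (J q')⁻¹) i q
            - pderivX (fun q' => pderivP J i q' * (J q')⁻¹) j q = 0)) := by
  have hneg : ∀ (L : ((Fin n → ℝ) × (Fin n → ℝ)) →L[ℝ] Matrix (Fin N) (Fin N) ℝ) w,
      (-L) w = -(L w) := fun _ _ => rfl
  have main : ∀ (i : Fin n) q,
      ∃ L : ((Fin n → ℝ) × (Fin n → ℝ)) →L[ℝ] Matrix (Fin N) (Fin N) ℝ,
        HasFDerivAt (fun q' => pderivP J i q' * (J q')⁻¹) L q ∧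
        fderiv ℝ (A i) q = -L ∧
        ∀ w, L w = fderiv ℝ (fderiv ℝ J) q w (Pi.single i 1, 0) * (J q)⁻¹
          - fderiv ℝ J q (Pi.single i 1, 0) * ((J q)⁻¹ * (fderiv ℝ J q w * (J q)⁻¹)) := by
    intro i q
    obtain ⟨L, hL, hLw⟩ := key_stmt_7 J hJ hJinv (Pi.single i 1, 0) q
    have hL' : HasFDerivAt (fun q' => pderivP J i q' * (J q')⁻¹) L q := hL
    refine ⟨L, hL', ?_, hLw⟩
    have hAi : A i = fun q' => -(pderivP J i q' * (J q')⁻¹) := funext fun q' => hA i q'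
    rw [hAi]
    exact hL'.neg.fderiv
  constructor
  · intro h i j q
    obtain ⟨Li, hLi, hAi, hLiw⟩ := main i q
    obtain ⟨Lj, hLj, hAj, hLjw⟩ := main j q
    have h2 := (h i j q).2
    simp only [pderivX] at h2 ⊢
    erw [hLi.fderiv, hLj.fderiv]
    erw [hAi, hAj, hneg, hneg,
      neg_sub_neg] at h2
    exact h2
  · intro h i j q
    obtain ⟨Li, hLi, hAi, hLiw⟩ := main i q
    obtain ⟨Lj, hLj, hAj, hLjw⟩ := main j q
    constructor
    · have hs : fderiv ℝ (fderiv ℝ J) q ((Pi.single j 1 : Fin n → ℝ), (0 : Fin n → ℝ))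
          ((Pi.single i 1 : Fin n → ℝ), (0 : Fin n → ℝ))
          = fderiv ℝ (fderiv ℝ J) q ((Pi.single i 1 : Fin n → ℝ), (0 : Fin n → ℝ))
          ((Pi.single j 1 : Fin n → ℝ), (0 : Fin n → ℝ)) :=
        (hJ.contDiffAt.isSymmSndFDerivAt (by simp)) _ _
      simp only [pderivP]
      erw [hAi, hAj, hneg, hneg,
        hLiw, hLjw, hA i q, hA j q]
      simp only [pderivP]
      rw [hs]
      have key : ∀ a b c e : Matrix (Fin N) (Fin N) ℝ,
          -(a * e) * -(b * e) - -(b * e) * -(a * e) - -(c * e - a * (e * (b * e)))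
            + -(c * e - b * (e * (a * e))) = 0 := by
        intros; noncomm_ring
      exact key _ _ _ _
    · have h2 := h i j q
      simp only [pderivX] at h2 ⊢
      erw [hLi.fderiv, hLj.fderiv] at h2
      erw [hAi, hAj, hneg, hneg,
        neg_sub_neg]
      exact h2
end

section
/- Let J : ℝ^n × ℝ^n → M_N(ℝ) be twice continuously differentiable with J(p,x) invertible for every (p,x), and define A_{i0} := J^{−1} (∂J/∂p_i) for 1 ≤ i ≤ n. Then the Takasaki system, namely [A_{i0},A_{j0}] − ∂A_{i0}/∂p_j + ∂A_{j0}/∂p_i = 0 and ∂A_{i0}/∂x_j − ∂A_{j0}/∂x_i = 0 for all 1 ≤ i, j ≤ n, holds everywhere if and only if ∂/∂x_i(J^{−1} ∂J/∂p_j) − ∂/∂x_j(J^{−1} ∂J/∂p_i) = 0 for all 1 ≤ i, j ≤ n everywhere. (In particular the first family of equations holds automatically for this choice of A_{i0}.) -/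
open Finset

attribute [local instance] Matrix.linftyOpNormedAddCommGroup Matrix.linftyOpNormedSpace

section Aux

attribute [local instance] Matrix.linftyOpNormedRing Matrix.linftyOpNormedAlgebra

instance matComplete (N : ℕ) : CompleteSpace (Matrix (Fin N) (Fin N) ℝ) :=
  FiniteDimensional.complete ℝ _

/-- Derivative of `q ↦ (J q)⁻¹ * (D J q v)`. -/
lemma key_deriv (n N : ℕ)
    (J : ((Fin n → ℝ) × (Fin n → ℝ)) → Matrix (Fin N) (Fin N) ℝ)
    (hJ : ContDiff ℝ 2 J) (hJinv : ∀ q, IsUnit (J q))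
    (v w q : (Fin n → ℝ) × (Fin n → ℝ)) :
    fderiv ℝ (fun q' => (J q')⁻¹ * fderiv ℝ J q' v) q w
      = (J q)⁻¹ * fderiv ℝ (fderiv ℝ J) q w v
        - (J q)⁻¹ * fderiv ℝ J q w * ((J q)⁻¹ * fderiv ℝ J q v) := by
  have hJd : ∀ y, HasFDerivAt J (fderiv ℝ J y) y := fun y =>
    ((hJ.differentiable two_ne_zero) y).hasFDerivAt
  have hF := hJ.fderiv_right (m := 1) (by norm_num)
  have hFd : HasFDerivAt (fderiv ℝ J) (fderiv ℝ (fderiv ℝ J) q) q :=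
    ((hF.differentiable one_ne_zero) q).hasFDerivAt
  have hB : HasFDerivAt (fun q' => fderiv ℝ J q' v)
      ((ContinuousLinearMap.apply ℝ _ v).comp (fderiv ℝ (fderiv ℝ J) q)) q := by
    exact HasFDerivAt.comp q (ContinuousLinearMap.apply ℝ (Matrix (Fin N) (Fin N) ℝ) v).hasFDerivAt hFd
  set u := (hJinv q).unit with hu
  have huc : (u : Matrix (Fin N) (Fin N) ℝ) = J q := (hJinv q).unit_spec
  have hinv0 : HasFDerivAt Ring.inverse
      (-(ContinuousLinearMap.mulLeftRight ℝ _ ↑u⁻¹ ↑u⁻¹)) (J q) := by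
    rw [← huc]; exact hasFDerivAt_ringInverse u
  have hI : HasFDerivAt (fun q' => (J q')⁻¹)
      ((-(ContinuousLinearMap.mulLeftRight ℝ _ ↑u⁻¹ ↑u⁻¹)).comp (fderiv ℝ J q)) q := by
    rw [show (fun q' => (J q')⁻¹) = Ring.inverse ∘ J from funext fun x => Matrix.nonsing_inv_eq_ringInverse (J x)]
    exact hinv0.comp q (hJd q)
  have hprod := hI.mul' hB
  erw [hprod.fderiv]
  have huinv : ((u⁻¹ : (Matrix (Fin N) (Fin N) ℝ)ˣ) : Matrix (Fin N) (Fin N) ℝ) = (J q)⁻¹ := by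
    rw [Matrix.coe_units_inv, huc]
  show (J q)⁻¹ * fderiv ℝ (fderiv ℝ J) q w v
      + (-(((u⁻¹ : (Matrix (Fin N) (Fin N) ℝ)ˣ) : Matrix (Fin N) (Fin N) ℝ) * fderiv ℝ J q w
        * ((u⁻¹ : (Matrix (Fin N) (Fin N) ℝ)ˣ) : Matrix (Fin N) (Fin N) ℝ))) * fderiv ℝ J q v = _
  rw [huinv]
  noncomm_ring

end Aux

theorem stmt_8 (n N : ℕ) (hn : 2 ≤ n) (hN : 2 ≤ N)
    (J : ((Fin n → ℝ) × (Fin n → ℝ)) → Matrix (Fin N) (Fin N) ℝ)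
    (hJ : ContDiff ℝ 2 J) (hJinv : ∀ q, IsUnit (J q))
    (A : Fin n → ((Fin n → ℝ) × (Fin n → ℝ)) → Matrix (Fin N) (Fin N) ℝ)
    (hA : ∀ i q, A i q = (J q)⁻¹ * pderivP J i q) :
    ((∀ (i j : Fin n) q,
        ((A i q * A j q - A j q * A i q) - pderivP (A i) j q + pderivP (A j) i q = 0) ∧
        (pderivX (A i) j q - pderivX (A j) i q = 0))
      ↔ (∀ (i j : Fin n) q,
          pderivX (fun q' => (J q')⁻¹ * pderivP J j q') i q
            - pderivX (fun q' => (J q')⁻¹ * pderivP J i q') j q = 0)) := by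
  have hA' : ∀ i, A i = fun q' => (J q')⁻¹ * fderiv ℝ J q' (Pi.single i 1, (0 : Fin n → ℝ)) :=
    fun i => funext fun q' => (hA i q')
  have hJd : ∀ y, HasFDerivAt J (fderiv ℝ J y) y := fun y =>
    ((hJ.differentiable two_ne_zero) y).hasFDerivAt
  have hF := hJ.fderiv_right (m := 1) (by norm_num)
  -- the Takasaki `p`-equations hold automatically
  have h1 : ∀ (i j : Fin n) q,
      (A i q * A j q - A j q * A i q) - pderivP (A i) j q + pderivP (A j) i q = 0 := by
    intro i j q
    have hFd : HasFDerivAt (fderiv ℝ J) (fderiv ℝ (fderiv ℝ J) q) q :=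
      ((hF.differentiable one_ne_zero) q).hasFDerivAt
    have sym := second_derivative_symmetric hJd hFd
      (Pi.single i 1, (0 : Fin n → ℝ)) (Pi.single j 1, (0 : Fin n → ℝ))
    simp only [hA' i, hA' j, pderivP]
    erw [key_deriv n N J hJ hJinv (Pi.single i 1, (0 : Fin n → ℝ)) (Pi.single j 1, 0) q,
      key_deriv n N J hJ hJinv (Pi.single j 1, (0 : Fin n → ℝ)) (Pi.single i 1, 0) q, sym]
    abel
    rw [neg_one_smul]
    exact neg_add_cancel _
  have hAe : ∀ i, A i = fun q' => (J q')⁻¹ * pderivP J i q' := fun i => funext (hA i)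
  constructor
  · intro h i j q
    have := (h j i q).2
    rw [hAe j, hAe i] at this
    exact this
  · intro h i j q
    refine ⟨h1 i j q, ?_⟩
    have := h j i q
    rw [hAe i, hAe j]
    exact this
end

section
/- Let B ≥ 0, let λ_1,…,λ_N ∈ ℝ, let h_1,…,h_N : ℝ^n → ℝ satisfy |h_s(y)| ≤ B for all y ∈ ℝ^n, and let γ_1,…,γ_N ∈ ℝ satisfy |γ_s| > B for all s and |γ_s − γ_t| > 2B for all s ≠ t. Let e_1,…,e_N be integers, define f_s(p,x) := h_s(a(λ_s)·p + x) + γ_s, and let H_1(p,x) be the N×N matrix with entries (H_1(p,x))_{r,s} = f_s(p,x)^{e_s + r} for 0 ≤ r ≤ N−1, 1 ≤ s ≤ N. Then det H_1(p,x) ≠ 0 for every (p,x) ∈ ℝ^n × ℝ^n. -/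
open Finset

theorem stmt_12 (n N M : ℕ) (hn : 2 ≤ n) (hN : 1 ≤ N)
    (a : Fin n → ℕ → ℝ)
    (B : ℝ) (hB : 0 ≤ B)
    (lam : Fin N → ℝ)
    (h : Fin N → (Fin n → ℝ) → ℝ)
    (hhb : ∀ s y, |h s y| ≤ B)
    (γ : Fin N → ℝ)
    (hγ1 : ∀ s, B < |γ s|)
    (hγ2 : ∀ s t, s ≠ t → 2 * B < |γ s - γ t|)
    (e : Fin N → ℤ)
    (f : Fin N → ((Fin n → ℝ) × (Fin n → ℝ)) → ℝ)
    (hf : ∀ s q, f s q =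
      h s (fun m => (∑ k ∈ Finset.range (M + 1), a m k * lam s ^ (k + 1)) * q.1 m + q.2 m)
        + γ s) :
    ∀ q, (Matrix.of fun r s : Fin N => f s q ^ (e s + (r : ℕ))).det ≠ 0 := by
  intro q
  set v : Fin N → ℝ := fun s => f s q with hv
  have hv0 : ∀ s, v s ≠ 0 := by
    intro s hz
    have h1 := hγ1 s
    have h2 := hhb s (fun m => (∑ k ∈ Finset.range (M + 1), a m k * lam s ^ (k + 1)) * q.1 m + q.2 m)
    have h3 : v s = h s (fun m => (∑ k ∈ Finset.range (M + 1), a m k * lam s ^ (k + 1)) * q.1 m + q.2 m) + γ s := hf s q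
    rw [hz] at h3
    have : |γ s| ≤ B := by
      have : γ s = -(h s (fun m => (∑ k ∈ Finset.range (M + 1), a m k * lam s ^ (k + 1)) * q.1 m + q.2 m)) := by linarith
      rw [this, abs_neg]; exact h2
    linarith
  have hvinj : Function.Injective v := by
    intro s t hst
    by_contra hne
    have h2 := hγ2 s t hne
    have hs := hhb s (fun m => (∑ k ∈ Finset.range (M + 1), a m k * lam s ^ (k + 1)) * q.1 m + q.2 m)
    have ht := hhb t (fun m => (∑ k ∈ Finset.range (M + 1), a m k * lam t ^ (k + 1)) * q.1 m + q.2 m)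
    have hst2 : (h s fun m => (∑ k ∈ Finset.range (M + 1), a m k * lam s ^ (k + 1)) * q.1 m + q.2 m) + γ s
        = (h t fun m => (∑ k ∈ Finset.range (M + 1), a m k * lam t ^ (k + 1)) * q.1 m + q.2 m) + γ t := by
      rw [← hf s q, ← hf t q]; exact hst
    have : |γ s - γ t| ≤ 2 * B := by
      have heq : γ s - γ t =
          h t (fun m => (∑ k ∈ Finset.range (M + 1), a m k * lam t ^ (k + 1)) * q.1 m + q.2 m)
          - h s (fun m => (∑ k ∈ Finset.range (M + 1), a m k * lam s ^ (k + 1)) * q.1 m + q.2 m) := by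
        linarith
      rw [heq]
      calc _ ≤ |h t (fun m => (∑ k ∈ Finset.range (M + 1), a m k * lam t ^ (k + 1)) * q.1 m + q.2 m)|
              + |h s (fun m => (∑ k ∈ Finset.range (M + 1), a m k * lam s ^ (k + 1)) * q.1 m + q.2 m)| := abs_sub _ _
        _ ≤ 2 * B := by linarith
    linarith
  have key : (Matrix.of fun r s : Fin N => f s q ^ (e s + (r : ℕ)))
      = (Matrix.vandermonde v).transpose * Matrix.diagonal (fun s => v s ^ e s) := by
    ext r s
    simp only [Matrix.of_apply, Matrix.mul_apply, Matrix.diagonal_apply, Matrix.transpose_apply,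
      Matrix.vandermonde_apply, mul_ite, mul_zero, Finset.sum_ite_eq', Finset.mem_univ, if_true]
    rw [zpow_add₀ (hv0 s), zpow_natCast]
    ring
  rw [key, Matrix.det_mul, Matrix.det_transpose, Matrix.det_vandermonde, Matrix.det_diagonal]
  apply mul_ne_zero
  · refine Finset.prod_ne_zero_iff.mpr fun i _ => Finset.prod_ne_zero_iff.mpr fun j hj => ?_
    exact sub_ne_zero.mpr fun hc => (Finset.mem_Ioi.mp hj).ne' (hvinj hc)
  · exact Finset.prod_ne_zero_iff.mpr fun s _ => zpow_ne_zero _ (hv0 s)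
end

section
/- Let n_1, N_1, n_2, N_2 be positive integers with n_1·N_1 = n_2·N_2 = N, let μ_1,…,μ_{N_1} be distinct real numbers, and let B ≥ 0. Let λ_1,…,λ_{N_2} ∈ ℝ, let f_1,…,f_{N_2} : ℝ^n → ℝ be nowhere-vanishing functions, let h_1,…,h_{N_2} : ℝ^n → ℝ satisfy |h_j(y)| ≤ B for all y, and let γ_1,…,γ_{N_2} ∈ ℝ satisfy |γ_i − γ_j| > 2B for all i ≠ j and |γ_j| > B + max_{1 ≤ k ≤ N_1} |μ_k| for all j. Let e_1,…,e_N be integers and define g_j(p,x) := h_j(a(λ_j)·p + x) + γ_j and F_j(p,x) := f_j(a(λ_j)·p + x). Let H_2(p,x) be the N×N matrix with rows indexed by pairs (k,i), 0 ≤ k ≤ n_1−1, 1 ≤ i ≤ N_1, columns by pairs (l,j), 0 ≤ l ≤ n_2−1, 1 ≤ j ≤ N_2 (both identified with {0,…,N−1} lexicographically, block index first), and entries binom(k+l, k) · F_j(p,x)^{e_{l·N_2+j}} / (μ_i − g_j(p,x))^{k+l+1}. Then det H_2(p,x) ≠ 0 for every (p,x) ∈ ℝ^n × ℝ^n. -/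
open Finset

lemma aux_inv {R : Type*} [CommRing R] [Algebra ℝ R] {m : ℕ} (t : R) (ht : t ^ (m + 1) = 0)
    {d : ℝ} (hd : d ≠ 0) (l : ℕ) :
    (t + algebraMap ℝ R d) ^ (l + 1) *
      (∑ k ∈ Finset.range (m + 1),
        algebraMap ℝ R ((-1) ^ k * ((l + k).choose k : ℝ) * (d ^ (k + l + 1))⁻¹) * t ^ k) = 1 := by
  set A := algebraMap ℝ R with hA
  have hS : ∀ c : ℕ → ℝ, (t + A d) * (∑ k ∈ Finset.range (m + 1), A (c k) * t ^ k)
      = ∑ k ∈ Finset.range (m + 1),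
          A ((if k = 0 then 0 else c (k - 1)) + d * c k) * t ^ k := by
    intro c
    have h1 : t * ∑ k ∈ Finset.range (m + 1), A (c k) * t ^ k
        = ∑ k ∈ Finset.range (m + 1), A (if k = 0 then 0 else c (k - 1)) * t ^ k := by
      rw [Finset.mul_sum, Finset.sum_range_succ, Finset.sum_range_succ']
      have : t * (A (c m) * t ^ m) = A (c m) * t ^ (m + 1) := by ring
      rw [this, ht]
      simp only [mul_zero, add_zero, Nat.succ_ne_zero, ite_false, ite_true, eq_self_iff_true,
        Nat.add_sub_cancel, map_zero, zero_mul]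
      apply Finset.sum_congr rfl
      intro k _
      ring
    have h2 : A d * ∑ k ∈ Finset.range (m + 1), A (c k) * t ^ k
        = ∑ k ∈ Finset.range (m + 1), A (d * c k) * t ^ k := by
      rw [Finset.mul_sum]
      apply Finset.sum_congr rfl
      intro k _
      rw [map_mul]; ring
    rw [add_mul, h1, h2, ← Finset.sum_add_distrib]
    apply Finset.sum_congr rfl
    intro k _
    rw [map_add]; ring
  have hδ : ∑ k ∈ Finset.range (m + 1), A (if k = 0 then (1 : ℝ) else 0) * t ^ k = 1 := by
    rw [Finset.sum_range_succ']
    simp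
  induction l with
  | zero =>
      rw [pow_one, hS]
      rw [← hδ]
      apply Finset.sum_congr rfl
      intro k _
      congr 1
      congr 1
      rcases k with _ | k'
      · simp; field_simp
      · simp only [Nat.succ_ne_zero, if_neg, if_false, Nat.add_sub_cancel]
        have h01 : ((0 + k').choose k' : ℝ) = 1 := by simp
        have h02 : ((0 + (k' + 1)).choose (k' + 1) : ℝ) = 1 := by simp
        rw [h01, h02]
        rw [pow_succ (-1 : ℝ) k']
        have : (k' + 1 + 0 + 1) = (k' + 0 + 1) + 1 := by ring
        rw [this, pow_succ d]
        field_simp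
        ring
  | succ l ih =>
      have : (t + A d) ^ (l + 1 + 1) = (t + A d) ^ (l + 1) * (t + A d) := pow_succ _ _
      rw [this, mul_assoc, hS]
      have hco : ∀ k, ((if k = 0 then 0 else
            (-1) ^ (k-1) * (((l+1) + (k-1)).choose (k-1) : ℝ) * (d ^ ((k-1) + (l+1) + 1))⁻¹)
          + d * ((-1) ^ k * (((l+1) + k).choose k : ℝ) * (d ^ (k + (l+1) + 1))⁻¹))
          = (-1) ^ k * ((l + k).choose k : ℝ) * (d ^ (k + l + 1))⁻¹ := by
        intro k
        rcases k with _ | k'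
        · simp only [if_pos rfl, zero_add, pow_zero, one_mul, Nat.add_zero, Nat.choose_zero_right,
            Nat.cast_one, mul_one]
          norm_num
          rw [pow_succ d (l+1)]
          field_simp
        · simp only [Nat.succ_ne_zero, if_false, Nat.add_sub_cancel]
          have pascal : ((l + 1 + (k' + 1)).choose (k' + 1) : ℝ)
              = ((l + k' + 1).choose k' : ℝ) + ((l + k' + 1).choose (k' + 1) : ℝ) := by
            rw [show l + 1 + (k' + 1) = (l + k' + 1) + 1 by ring]
            rw [Nat.choose_succ_succ']
            push_cast; ring
          rw [show l + 1 + k' = l + k' + 1 by ring] at *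
          rw [pascal]
          rw [show (l + (k' + 1)) = l + k' + 1 by ring]
          rw [show (k' + (l + 1) + 1) = (k' + l + 1) + 1 by ring,
            show (k' + 1 + (l + 1) + 1) = ((k' + l + 1) + 1) + 1 by ring,
            show (k' + 1 + l + 1) = (k' + l + 1) + 1 by ring]
          rw [pow_succ (-1:ℝ) k', pow_succ d ((k' + l + 1)+1), pow_succ d (k' + l + 1)]
          field_simp
          ring
      calc (t + A d) ^ (l + 1) * ∑ k ∈ Finset.range (m + 1),
            A ((if k = 0 then 0 else
              (-1) ^ (k-1) * (((l+1) + (k-1)).choose (k-1) : ℝ) * (d ^ ((k-1) + (l+1) + 1))⁻¹)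
              + d * ((-1) ^ k * (((l+1) + k).choose k : ℝ) * (d ^ (k + (l+1) + 1))⁻¹)) * t ^ k
          = (t + A d) ^ (l + 1) * ∑ k ∈ Finset.range (m + 1),
            A ((-1) ^ k * ((l + k).choose k : ℝ) * (d ^ (k + l + 1))⁻¹) * t ^ k := by
            congr 1
            apply Finset.sum_congr rfl
            intro k _
            rw [hco]
        _ = 1 := ih


open Polynomial in
lemma cauchy_kernel (n1 N1 n2 N2 : ℕ) (hn1 : 0 < n1) (hN1 : 0 < N1)
    (hn2 : 0 < n2) (hN2 : 0 < N2) (hNN : n1 * N1 = n2 * N2)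
    (u : Fin N1 → ℝ) (hu : Function.Injective u)
    (v : Fin N2 → ℝ) (hv : Function.Injective v)
    (huv : ∀ i j, u i ≠ v j)
    (c2 : Fin n2 → Fin N2 → ℝ)
    (hker : ∀ (k : Fin n1) (i : Fin N1),
      ∑ l : Fin n2, ∑ j : Fin N2,
        ((((k : ℕ) + (l : ℕ)).choose (k : ℕ) : ℝ) / (u i - v j) ^ ((k : ℕ) + (l : ℕ) + 1))
          * c2 l j = 0) :
    ∀ l j, c2 l j = 0 := by
  classical
  obtain ⟨m, rfl⟩ : ∃ m, n1 = m + 1 := ⟨n1 - 1, by omega⟩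
  set vp : Fin N2 → ℝ[X] := fun j => X - C (v j) with hvp
  set Pp : Fin N2 → ℝ[X] := fun j => ∏ j' ∈ Finset.univ.erase j, (vp j') ^ n2 with hPp
  set Ap : Fin N2 → ℝ[X] :=
    fun j => ∑ l : Fin n2, C (c2 l j) * (vp j) ^ (n2 - 1 - (l : ℕ)) with hAp
  set Q : ℝ[X] := ∑ j : Fin N2, Ap j * Pp j with hQ
  have hD : ∀ j : Fin N2, (vp j) ^ n2 * Pp j = ∏ j' : Fin N2, (vp j') ^ n2 := by
    intro j
    rw [hPp]
    exact Finset.mul_prod_erase Finset.univ (fun j' => (vp j') ^ n2) (Finset.mem_univ j)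
  -- Step 1 : each (X - C (u i))^(m+1) divides Q
  have step1 : ∀ i : Fin N1, (X - C (u i)) ^ (m + 1) ∣ Q := by
    intro i
    set I : Ideal ℝ[X] := Ideal.span {(X - C (u i)) ^ (m + 1)} with hI
    set π : ℝ[X] →+* (ℝ[X] ⧸ I) := Ideal.Quotient.mk I with hπ
    rw [← Ideal.mem_span_singleton, ← hI, ← Ideal.Quotient.eq_zero_iff_mem, ← hπ]
    set t : ℝ[X] ⧸ I := π (X - C (u i)) with htdef
    have ht : t ^ (m + 1) = 0 := by
      rw [htdef, ← map_pow, hπ, Ideal.Quotient.eq_zero_iff_mem, hI]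
      exact Ideal.subset_span rfl
    set A : ℝ →+* (ℝ[X] ⧸ I) := (algebraMap ℝ (ℝ[X] ⧸ I)) with hAdef
    have hAM : ∀ r : ℝ, A r = π (C r) := fun r => rfl
    have hvpπ : ∀ j : Fin N2, π (vp j) = t + algebraMap ℝ (ℝ[X] ⧸ I) (u i - v j) := by
      intro j
      rw [show algebraMap ℝ (ℝ[X] ⧸ I) (u i - v j) = A (u i - v j) from rfl, hAM, htdef,
        ← map_add]
      congr 1
      rw [hvp]; simp only [map_sub]; ring
    set E : Fin N2 → ℕ → (ℝ[X] ⧸ I) := fun j l =>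
      ∑ k ∈ Finset.range (m + 1),
        A ((-1) ^ k * ((l + k).choose k : ℝ) * ((u i - v j) ^ (k + l + 1))⁻¹) * t ^ k with hE
    have hEinv : ∀ (j : Fin N2) (l : ℕ), π (vp j) ^ (l + 1) * E j l = 1 := by
      intro j l
      rw [hvpπ j, hE]
      exact aux_inv t ht (sub_ne_zero.mpr (huv i j)) l
    have hG : ∀ (j : Fin N2) (l : Fin n2),
        π ((vp j) ^ (n2 - 1 - (l : ℕ)) * Pp j)
          = π (∏ j' : Fin N2, (vp j') ^ n2) * E j (l : ℕ) := by
      intro j l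
      have key : (vp j) ^ ((l : ℕ) + 1) * ((vp j) ^ (n2 - 1 - (l : ℕ)) * Pp j)
          = ∏ j' : Fin N2, (vp j') ^ n2 := by
        rw [← mul_assoc, ← pow_add,
          show (l : ℕ) + 1 + (n2 - 1 - (l : ℕ)) = n2 by omega, hD j]
      calc π ((vp j) ^ (n2 - 1 - (l : ℕ)) * Pp j)
          = (π (vp j) ^ ((l : ℕ) + 1) * E j (l : ℕ))
              * π ((vp j) ^ (n2 - 1 - (l : ℕ)) * Pp j) := by rw [hEinv j l, one_mul]
        _ = (π (vp j) ^ ((l : ℕ) + 1) * π ((vp j) ^ (n2 - 1 - (l : ℕ)) * Pp j)) * E j (l : ℕ) :=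
              mul_right_comm _ _ _
        _ = π ((vp j) ^ ((l : ℕ) + 1) * ((vp j) ^ (n2 - 1 - (l : ℕ)) * Pp j)) * E j (l : ℕ) := by
              rw [← map_pow, ← map_mul]
        _ = π (∏ j' : Fin N2, (vp j') ^ n2) * E j (l : ℕ) := by rw [key]
    -- the kernel equations kill the sum
    have coeff0 : ∀ k ∈ Finset.range (m + 1),
        (∑ j : Fin N2, ∑ l : Fin n2,
          c2 l j * ((-1) ^ k * (((l : ℕ) + k).choose k : ℝ)
            * ((u i - v j) ^ (k + (l : ℕ) + 1))⁻¹)) = 0 := by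
      intro k hk
      have h0 := hker ⟨k, Finset.mem_range.mp hk⟩ i
      simp only [Fin.val_mk] at h0
      calc (∑ j : Fin N2, ∑ l : Fin n2,
            c2 l j * ((-1) ^ k * (((l : ℕ) + k).choose k : ℝ)
              * ((u i - v j) ^ (k + (l : ℕ) + 1))⁻¹))
          = (-1 : ℝ) ^ k * ∑ l : Fin n2, ∑ j : Fin N2,
              (((k + (l : ℕ)).choose k : ℝ) / (u i - v j) ^ (k + (l : ℕ) + 1)) * c2 l j := by
            rw [Finset.sum_comm, Finset.mul_sum]
            apply Finset.sum_congr rfl; intro l _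
            rw [Finset.mul_sum]
            apply Finset.sum_congr rfl; intro j _
            rw [Nat.add_comm (l : ℕ) k, div_eq_mul_inv]
            ring
        _ = 0 := by rw [h0, mul_zero]
    have hπQ : π Q = 0 := by
      have expand : π Q = π (∏ j' : Fin N2, (vp j') ^ n2)
          * ∑ j : Fin N2, ∑ l : Fin n2, A (c2 l j) * E j (l : ℕ) := by
        rw [hQ, map_sum, Finset.mul_sum]
        apply Finset.sum_congr rfl
        intro j _
        rw [hAp, Finset.sum_mul, map_sum, Finset.mul_sum]
        apply Finset.sum_congr rfl
        intro l _
        rw [mul_assoc, map_mul, hG j l, hAM]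
        exact mul_left_comm _ _ _
      have inner : (∑ j : Fin N2, ∑ l : Fin n2, A (c2 l j) * E j (l : ℕ)) = 0 := by
        calc (∑ j : Fin N2, ∑ l : Fin n2, A (c2 l j) * E j (l : ℕ))
            = ∑ j : Fin N2, ∑ k ∈ Finset.range (m + 1), ∑ l : Fin n2,
                A (c2 l j * ((-1) ^ k * (((l : ℕ) + k).choose k : ℝ)
                  * ((u i - v j) ^ (k + (l : ℕ) + 1))⁻¹)) * t ^ k := by
              apply Finset.sum_congr rfl; intro j _
              rw [Finset.sum_comm]
              apply Finset.sum_congr rfl; intro l _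
              rw [hE, Finset.mul_sum]
              apply Finset.sum_congr rfl; intro k _
              rw [← mul_assoc, ← map_mul]
          _ = ∑ k ∈ Finset.range (m + 1), ∑ j : Fin N2, ∑ l : Fin n2,
                A (c2 l j * ((-1) ^ k * (((l : ℕ) + k).choose k : ℝ)
                  * ((u i - v j) ^ (k + (l : ℕ) + 1))⁻¹)) * t ^ k := Finset.sum_comm
          _ = ∑ k ∈ Finset.range (m + 1),
                A (∑ j : Fin N2, ∑ l : Fin n2,
                  c2 l j * ((-1) ^ k * (((l : ℕ) + k).choose k : ℝ)
                    * ((u i - v j) ^ (k + (l : ℕ) + 1))⁻¹)) * t ^ k := by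
              apply Finset.sum_congr rfl; intro k _
              rw [map_sum, Finset.sum_mul]
              apply Finset.sum_congr rfl; intro j _
              rw [map_sum, Finset.sum_mul]
          _ = 0 := by
              apply Finset.sum_eq_zero
              intro k hk
              rw [coeff0 k hk, map_zero, zero_mul]
      rw [expand, inner, mul_zero]
    exact hπQ
  -- Step 2 : the big product divides Q
  have step2 : (∏ i : Fin N1, (X - C (u i)) ^ (m + 1)) ∣ Q := by
    apply Finset.prod_dvd_of_coprime
    · intro i _ i' _ hii'
      exact ((Polynomial.pairwise_coprime_X_sub_C hu) hii').pow
    · exact fun i _ => step1 i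
  -- Step 3 : Q = 0 by degree count
  have hQ0 : Q = 0 := by
    by_contra hne
    have hdeg1 : (∏ i : Fin N1, (X - C (u i)) ^ (m + 1)).natDegree = N1 * (m + 1) := by
      rw [Polynomial.natDegree_prod _ _ (fun i _ => pow_ne_zero _ (X_sub_C_ne_zero (u i)))]
      simp [Polynomial.natDegree_pow, Polynomial.natDegree_X_sub_C, Finset.sum_const,
        Finset.card_univ, mul_comm]
    have hdeg2 : Q.natDegree ≤ n2 * N2 - 1 := by
      rw [hQ]
      apply Polynomial.natDegree_sum_le_of_forall_le
      intro j _
      apply le_trans (Polynomial.natDegree_mul_le)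
      have hA : (Ap j).natDegree ≤ n2 - 1 := by
        rw [hAp]
        apply Polynomial.natDegree_sum_le_of_forall_le
        intro l _
        apply le_trans (Polynomial.natDegree_mul_le)
        rw [Polynomial.natDegree_C, Polynomial.natDegree_pow, Polynomial.natDegree_X_sub_C]
        omega
      have hP : (Pp j).natDegree ≤ (N2 - 1) * n2 := by
        rw [hPp]
        apply le_trans (Polynomial.natDegree_prod_le _ _)
        have : ∀ j' ∈ Finset.univ.erase j, ((vp j') ^ n2).natDegree = n2 := by
          intro j' _
          rw [Polynomial.natDegree_pow, Polynomial.natDegree_X_sub_C, mul_one]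
        rw [Finset.sum_congr rfl this, Finset.sum_const,
          Finset.card_erase_of_mem (Finset.mem_univ j), Finset.card_univ]
        simp [Fintype.card_fin]
      have arith : n2 - 1 + (N2 - 1) * n2 ≤ n2 * N2 - 1 := by
        obtain ⟨m2, rfl⟩ : ∃ m2, N2 = m2 + 1 := ⟨N2 - 1, by omega⟩
        have e1 : (m2 + 1 - 1) * n2 = m2 * n2 := by norm_num
        have e2 : n2 * (m2 + 1) = n2 * m2 + n2 := by ring
        have e3 : m2 * n2 = n2 * m2 := Nat.mul_comm _ _
        omega
      omega
    have hle := Polynomial.natDegree_le_of_dvd step2 hne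
    rw [hdeg1] at hle
    have hNpos : 0 < (m + 1) * N1 := by positivity
    have hc : N1 * (m + 1) = (m + 1) * N1 := Nat.mul_comm _ _
    omega
  -- Step 4 : each Ap j = 0
  have hApz : ∀ j : Fin N2, Ap j = 0 := by
    intro j
    have hdvdP : (vp j) ^ n2 ∣ Ap j * Pp j := by
      have h1 : (vp j) ^ n2 ∣ ∑ j' ∈ Finset.univ.erase j, Ap j' * Pp j' := by
        apply Finset.dvd_sum
        intro j' hj'
        apply Dvd.dvd.mul_left
        rw [hPp]
        exact Finset.dvd_prod_of_mem _
          (Finset.mem_erase.mpr ⟨((Finset.mem_erase.mp hj').1).symm, Finset.mem_univ j⟩)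
      have h2 : Ap j * Pp j = Q - ∑ j' ∈ Finset.univ.erase j, Ap j' * Pp j' := by
        rw [hQ, ← Finset.add_sum_erase _ _ (Finset.mem_univ j)]
        ring
      rw [h2, hQ0, zero_sub]
      exact (h1).neg_right
    have hcop : IsCoprime ((vp j) ^ n2) (Pp j) := by
      apply IsCoprime.pow_left
      rw [hPp]
      apply IsCoprime.prod_right
      intro j' hj'
      apply IsCoprime.pow_right
      exact (Polynomial.pairwise_coprime_X_sub_C hv) (Finset.mem_erase.mp hj').1.symm
    have hdvdA : (vp j) ^ n2 ∣ Ap j := hcop.dvd_of_dvd_mul_right hdvdP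
    by_contra hne
    have := Polynomial.natDegree_le_of_dvd hdvdA hne
    rw [Polynomial.natDegree_pow, Polynomial.natDegree_X_sub_C, mul_one] at this
    have hA : (Ap j).natDegree ≤ n2 - 1 := by
      rw [hAp]
      apply Polynomial.natDegree_sum_le_of_forall_le
      intro l _
      apply le_trans (Polynomial.natDegree_mul_le)
      rw [Polynomial.natDegree_C, Polynomial.natDegree_pow, Polynomial.natDegree_X_sub_C]
      omega
    omega
  -- Step 5 : extract coefficients
  intro l0 j
  have h5 : (∑ l : Fin n2, C (c2 l j) * (vp j) ^ (n2 - 1 - (l : ℕ))) = 0 := hApz j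
  have h6 : (∑ l : Fin n2, C (c2 l j) * (vp j) ^ (n2 - 1 - (l : ℕ))).comp (X + C (v j)) = 0 := by
    rw [h5, Polynomial.zero_comp]
  have hcomp2 : (∑ l : Fin n2, C (c2 l j) * (vp j) ^ (n2 - 1 - (l : ℕ))).comp (X + C (v j))
      = ∑ l : Fin n2, C (c2 l j) * X ^ (n2 - 1 - (l : ℕ)) := by
    rw [show (∑ l : Fin n2, C (c2 l j) * (vp j) ^ (n2 - 1 - (l : ℕ))).comp (X + C (v j))
        = Polynomial.compRingHom (X + C (v j)) (∑ l : Fin n2, C (c2 l j) * (vp j) ^ (n2 - 1 - (l : ℕ)))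
        from rfl, map_sum]
    apply Finset.sum_congr rfl
    intro l _
    rw [show ∀ p : ℝ[X], Polynomial.compRingHom (X + C (v j)) p = p.comp (X + C (v j))
        from fun p => rfl]
    rw [Polynomial.mul_comp, Polynomial.pow_comp, Polynomial.C_comp]
    congr 2
    rw [hvp, Polynomial.sub_comp, Polynomial.X_comp, Polynomial.C_comp]
    ring
  have hsum0 : (∑ l : Fin n2, C (c2 l j) * X ^ (n2 - 1 - (l : ℕ))).coeff (n2 - 1 - (l0 : ℕ)) = 0 := by
    rw [← hcomp2, h6]; simp
  rw [Polynomial.finset_sum_coeff] at hsum0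
  have heval : ∀ l : Fin n2,
      (C (c2 l j) * X ^ (n2 - 1 - (l : ℕ))).coeff (n2 - 1 - (l0 : ℕ))
        = if l = l0 then c2 l j else 0 := by
    intro l
    rw [Polynomial.coeff_C_mul, Polynomial.coeff_X_pow]
    by_cases hl : l = l0
    · subst hl; simp
    · have hne1 : ¬ (n2 - 1 - (l : ℕ) = n2 - 1 - (l0 : ℕ)) := by
        have hx1 := l.isLt
        have hx2 := l0.isLt
        intro hcon
        exact hl (Fin.ext (by omega))
      have hne2 : ¬ (n2 - 1 - (l0 : ℕ) = n2 - 1 - (l : ℕ)) := fun hc => hne1 hc.symm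
      simp [hne1, hne2, hl]
  rw [Finset.sum_congr rfl (fun l _ => heval l), Finset.sum_ite_eq' Finset.univ l0] at hsum0
  simpa using hsum0


theorem stmt_13 (n M : ℕ) (hn : 2 ≤ n)
    (n1 N1 n2 N2 N : ℕ)
    (hn1 : 0 < n1) (hN1 : 0 < N1) (hn2 : 0 < n2) (hN2 : 0 < N2)
    (h1 : n1 * N1 = N) (h2 : n2 * N2 = N)
    (a : Fin n → ℕ → ℝ)
    (μ : Fin N1 → ℝ) (hμ : Function.Injective μ)
    (B : ℝ) (hB : 0 ≤ B)
    (lam : Fin N2 → ℝ)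
    (f : Fin N2 → (Fin n → ℝ) → ℝ) (hf0 : ∀ j y, f j y ≠ 0)
    (h : Fin N2 → (Fin n → ℝ) → ℝ) (hhb : ∀ j y, |h j y| ≤ B)
    (γ : Fin N2 → ℝ)
    (hγ2 : ∀ i j, i ≠ j → 2 * B < |γ i - γ j|)
    (hγ1 : ∀ j, B + (Finset.univ.sup' (Finset.univ_nonempty_iff.mpr ⟨⟨0, hN1⟩⟩)
      fun k : Fin N1 => |μ k|) < |γ j|)
    (e : Fin N → ℤ)
    (g : Fin N2 → ((Fin n → ℝ) × (Fin n → ℝ)) → ℝ)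
    (hg : ∀ j q, g j q =
      h j (fun m => (∑ k ∈ Finset.range (M + 1), a m k * lam j ^ (k + 1)) * q.1 m + q.2 m)
        + γ j)
    (Ff : Fin N2 → ((Fin n → ℝ) × (Fin n → ℝ)) → ℝ)
    (hFf : ∀ j q, Ff j q =
      f j (fun m => (∑ k ∈ Finset.range (M + 1), a m k * lam j ^ (k + 1)) * q.1 m + q.2 m))
    (H2 : ((Fin n → ℝ) × (Fin n → ℝ)) → Matrix (Fin N) (Fin N) ℝ)
    (hH2 : ∀ q (k : Fin n1) (i : Fin N1) (l : Fin n2) (j : Fin N2),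
      H2 q (Fin.cast h1 (finProdFinEquiv (k, i))) (Fin.cast h2 (finProdFinEquiv (l, j)))
        = (Nat.choose ((k : ℕ) + (l : ℕ)) (k : ℕ) : ℝ)
            * Ff j q ^ (e (Fin.cast h2 (finProdFinEquiv (l, j))))
            / (μ i - g j q) ^ ((k : ℕ) + (l : ℕ) + 1)) :
    ∀ q, (H2 q).det ≠ 0 := by
  classical
  intro q
  set eR : (Fin n1 × Fin N1) ≃ Fin N := finProdFinEquiv.trans (finCongr h1) with heR
  set eC : (Fin n2 × Fin N2) ≃ Fin N := finProdFinEquiv.trans (finCongr h2) with heC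
  have heRa : ∀ p : Fin n1 × Fin N1, eR p = Fin.cast h1 (finProdFinEquiv p) := by
    intro p; rw [heR]; rfl
  have heCa : ∀ p : Fin n2 × Fin N2, eC p = Fin.cast h2 (finProdFinEquiv p) := by
    intro p; rw [heC]; rfl
  set v : Fin N2 → ℝ := fun j => g j q with hvdef
  set y : Fin N2 → (Fin n → ℝ) := fun j m =>
    (∑ k ∈ Finset.range (M + 1), a m k * lam j ^ (k + 1)) * q.1 m + q.2 m with hy
  have hvj : ∀ j, v j = h j (y j) + γ j := fun j => hg j q
  set S : ℝ := Finset.univ.sup' (Finset.univ_nonempty_iff.mpr ⟨⟨0, hN1⟩⟩)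
    (fun k : Fin N1 => |μ k|) with hS
  have hμS : ∀ i, |μ i| ≤ S := by
    intro i
    rw [hS]
    exact Finset.le_sup' (fun k : Fin N1 => |μ k|) (Finset.mem_univ i)
  -- injectivity of v
  have hv : Function.Injective v := by
    intro j j' hjj
    by_contra hne
    have hd : γ j - γ j' = h j' (y j') - h j (y j) := by
      have := hvj j
      have := hvj j'
      have : h j (y j) + γ j = h j' (y j') + γ j' := by rw [← hvj j, ← hvj j', hjj]
      linarith
    have : |γ j - γ j'| ≤ 2 * B := by
      rw [hd]
      calc |h j' (y j') - h j (y j)| ≤ |h j' (y j')| + |h j (y j)| := abs_sub _ _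
        _ ≤ B + B := add_le_add (hhb j' (y j')) (hhb j (y j))
        _ = 2 * B := by ring
    exact absurd (hγ2 j j' hne) (not_lt.mpr this)
  -- μ i ≠ v j
  have huv : ∀ i j, μ i ≠ v j := by
    intro i j hcon
    have h1' : |γ j| ≤ |v j| + B := by
      have : γ j = v j - h j (y j) := by rw [hvj j]; ring
      rw [this]
      calc |v j - h j (y j)| ≤ |v j| + |h j (y j)| := abs_sub _ _
        _ ≤ |v j| + B := by linarith [hhb j (y j)]
    rw [← hcon] at h1'
    have := hγ1 j
    linarith [hμS i]
  -- the scaling vector and the Cauchy matrix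
  set s : Fin N → ℝ := fun c => Ff (eC.symm c).2 q ^ e c with hs
  set Cm : Matrix (Fin N) (Fin N) ℝ := fun r c =>
    ((((eR.symm r).1 : ℕ) + ((eC.symm c).1 : ℕ)).choose ((eR.symm r).1 : ℕ) : ℝ)
      / (μ (eR.symm r).2 - v (eC.symm c).2)
        ^ (((eR.symm r).1 : ℕ) + ((eC.symm c).1 : ℕ) + 1) with hCm
  have hsne : ∀ c, s c ≠ 0 := by
    intro c
    rw [hs]
    apply zpow_ne_zero
    rw [hFf]
    exact hf0 _ _
  have hfact : H2 q = Cm * Matrix.diagonal s := by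
    ext r c
    obtain ⟨⟨k, i⟩, rfl⟩ := eR.surjective r
    obtain ⟨⟨l, j⟩, rfl⟩ := eC.surjective c
    rw [Matrix.mul_diagonal]
    rw [heRa, heCa, hH2 q k i l j]
    rw [hCm, hs]
    simp only [← heRa (k, i), ← heCa (l, j), Equiv.symm_apply_apply]
    have hvg : v j = g j q := rfl
    rw [← hvg]
    ring
  -- determinant of Cm is nonzero
  have hdet : Cm.det ≠ 0 := by
    intro h0
    obtain ⟨w, hw0, hww⟩ := (Matrix.exists_mulVec_eq_zero_iff).mpr h0
    set c2 : Fin n2 → Fin N2 → ℝ := fun l j => w (eC (l, j)) with hc2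
    have hker : ∀ (k : Fin n1) (i : Fin N1),
        ∑ l : Fin n2, ∑ j : Fin N2,
          ((((k : ℕ) + (l : ℕ)).choose (k : ℕ) : ℝ) / (μ i - v j) ^ ((k : ℕ) + (l : ℕ) + 1))
            * c2 l j = 0 := by
      intro k i
      have hrow : (Cm.mulVec w) (eR (k, i)) = 0 := by rw [hww]; rfl
      rw [Matrix.mulVec, dotProduct] at hrow
      rw [← hrow]
      rw [← Equiv.sum_comp eC (fun c => Cm (eR (k, i)) c * w c)]
      rw [Fintype.sum_prod_type]
      apply Finset.sum_congr rfl; intro l _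
      apply Finset.sum_congr rfl; intro j _
      rw [hCm, hc2]
      simp only [Equiv.symm_apply_apply]
    have hall := cauchy_kernel n1 N1 n2 N2 hn1 hN1 hn2 hN2 (h1.trans h2.symm)
      μ hμ v hv huv c2 hker
    apply hw0
    funext c
    have := hall (eC.symm c).1 (eC.symm c).2
    rw [hc2] at this
    simpa [Equiv.apply_symm_apply] using this
  rw [hfact, Matrix.det_mul, Matrix.det_diagonal]
  exact mul_ne_zero hdet (Finset.prod_ne_zero_iff.mpr fun c _ => hsne c)
end

section
/- Let K_n be the fraction field of the polynomial ring R_n = MvPolynomial over ℝ in variables X_1,…,X_n, and K_{2n} the fraction field of R_{2n} = MvPolynomial over ℝ in variables P_1,…,P_n, X_1,…,X_n. For λ ∈ ℝ let σ_λ : K_n → K_{2n} be the field embedding induced by the injective ring homomorphism R_n → R_{2n} sending X_m ↦ a_m(λ)·P_m + X_m. Let f_1,…,f_N be nonzero, pairwise distinct elements of K_n, let λ_1,…,λ_N ∈ ℝ, and let e_1,…,e_N be integers. Then the N×N matrix over K_{2n} with entries σ_{λ_s}(f_s)^{e_s + r} (0 ≤ r ≤ N−1, 1 ≤ s ≤ N)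 has nonzero determinant. -/
open Finset

/-- The ring homomorphism `R_n → R_{2n}` given by the substitution
`X_m ↦ a_m(λ)·P_m + X_m`, where the `P`-variables are indexed by `Sum.inl`
and the `X`-variables by `Sum.inr`. -/
noncomputable def substHom (n M : ℕ) (a : Fin n → ℕ → ℝ) (lam : ℝ) :
    MvPolynomial (Fin n) ℝ →+* MvPolynomial (Fin n ⊕ Fin n) ℝ :=
  (MvPolynomial.aeval fun m : Fin n =>
    MvPolynomial.C (∑ k ∈ Finset.range (M + 1), a m k * lam ^ (k + 1))
        * MvPolynomial.X (Sum.inl m)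
      + MvPolynomial.X (Sum.inr m)).toRingHom

/-- Evaluation `P ↦ 0`, left inverse to `substHom`. -/
noncomputable def evalP0 (n : ℕ) :
    MvPolynomial (Fin n ⊕ Fin n) ℝ →+* MvPolynomial (Fin n) ℝ :=
  (MvPolynomial.aeval (Sum.elim (fun _ => 0) MvPolynomial.X)).toRingHom

lemma evalP0_substHom (n M : ℕ) (a : Fin n → ℕ → ℝ) (lam : ℝ)
    (p : MvPolynomial (Fin n) ℝ) : evalP0 n (substHom n M a lam p) = p := by
  have h : (evalP0 n).comp (substHom n M a lam) = RingHom.id _ := by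
    apply MvPolynomial.ringHom_ext
    · intro r; simp [evalP0, substHom]
    · intro m; simp [evalP0, substHom]
  calc evalP0 n (substHom n M a lam p) = ((evalP0 n).comp (substHom n M a lam)) p := rfl
    _ = p := by rw [h]; rfl

theorem stmt_14 (n N M : ℕ) (hn : 2 ≤ n) (hN : 2 ≤ N)
    (a : Fin n → ℕ → ℝ) (lam : Fin N → ℝ)
    (σ : ℝ → (FractionRing (MvPolynomial (Fin n) ℝ)
      →+* FractionRing (MvPolynomial (Fin n ⊕ Fin n) ℝ)))
    (hσ : ∀ (l : ℝ) (p : MvPolynomial (Fin n) ℝ),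
      σ l (algebraMap (MvPolynomial (Fin n) ℝ) (FractionRing (MvPolynomial (Fin n) ℝ)) p)
        = algebraMap (MvPolynomial (Fin n ⊕ Fin n) ℝ)
            (FractionRing (MvPolynomial (Fin n ⊕ Fin n) ℝ)) (substHom n M a l p))
    (f : Fin N → FractionRing (MvPolynomial (Fin n) ℝ))
    (hf0 : ∀ s, f s ≠ 0)
    (hfd : ∀ s t, s ≠ t → f s ≠ f t)
    (e : Fin N → ℤ) :
    (Matrix.of fun r s : Fin N => (σ (lam s)) (f s) ^ (e s + (r : ℕ))).det ≠ 0 := by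
  let R := MvPolynomial (Fin n) ℝ
  let R2 := MvPolynomial (Fin n ⊕ Fin n) ℝ
  let K := FractionRing R
  let K2 := FractionRing R2
  let g : Fin N → K2 := fun s => σ (lam s) (f s)
  have hg0 : ∀ s, g s ≠ 0 := fun s h =>
    hf0 s ((σ (lam s)).injective (by rw [map_zero]; exact h))
  -- injectivity of g
  have hginj : Function.Injective g := by
    intro s t hst
    by_contra hne
    apply hfd s t hne
    obtain ⟨ps, qs, hqs, hfs⟩ := IsFractionRing.div_surjective (A := R) (f s)
    obtain ⟨pt, qt, hqt, hft⟩ := IsFractionRing.div_surjective (A := R) (f t)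
    have hqs0 : qs ≠ 0 := nonZeroDivisors.ne_zero hqs
    have hqt0 : qt ≠ 0 := nonZeroDivisors.ne_zero hqt
    have hSqs : substHom n M a (lam s) qs ≠ 0 := fun h => hqs0 (by
      have := evalP0_substHom n M a (lam s) qs; rw [h] at this; simpa using this.symm)
    have hSqt : substHom n M a (lam t) qt ≠ 0 := fun h => hqt0 (by
      have := evalP0_substHom n M a (lam t) qt; rw [h] at this; simpa using this.symm)
    have hAqs : (algebraMap R2 K2) (substHom n M a (lam s) qs) ≠ 0 := by
      simpa using (IsFractionRing.to_map_eq_zero_iff (K := K2)).not.mpr hSqs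
    have hAqt : (algebraMap R2 K2) (substHom n M a (lam t) qt) ≠ 0 := by
      simpa using (IsFractionRing.to_map_eq_zero_iff (K := K2)).not.mpr hSqt
    have hgs : g s = (algebraMap R2 K2) (substHom n M a (lam s) ps)
        / (algebraMap R2 K2) (substHom n M a (lam s) qs) := by
      show σ (lam s) (f s) = _
      rw [← hfs, map_div₀, hσ, hσ]
    have hgt : g t = (algebraMap R2 K2) (substHom n M a (lam t) pt)
        / (algebraMap R2 K2) (substHom n M a (lam t) qt) := by
      show σ (lam t) (f t) = _
      rw [← hft, map_div₀, hσ, hσ]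
    rw [hgs, hgt, div_eq_div_iff hAqs hAqt] at hst
    rw [← map_mul, ← map_mul] at hst
    have h2 : substHom n M a (lam s) ps * substHom n M a (lam t) qt
        = substHom n M a (lam t) pt * substHom n M a (lam s) qs :=
      IsFractionRing.injective R2 K2 hst
    have h3 : ps * qt = pt * qs := by
      have := congrArg (evalP0 n) h2
      simpa [map_mul, evalP0_substHom] using this
    have hAq : (algebraMap R K) qs ≠ 0 :=
      by simpa using (IsFractionRing.to_map_eq_zero_iff (K := K)).not.mpr hqs0
    have hAq' : (algebraMap R K) qt ≠ 0 :=
      by simpa using (IsFractionRing.to_map_eq_zero_iff (K := K)).not.mpr hqt0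
    rw [← hfs, ← hft, div_eq_div_iff hAq hAq', ← map_mul, ← map_mul, h3]
  -- factor the determinant
  have key : (Matrix.of fun r s : Fin N => g s ^ (e s + (r : ℕ)))
      = Matrix.transpose (Matrix.vandermonde g) * Matrix.diagonal (fun s => g s ^ e s) := by
    ext r s
    rw [Matrix.mul_diagonal]
    simp only [Matrix.of_apply, Matrix.transpose_apply, Matrix.vandermonde_apply]
    rw [zpow_add₀ (hg0 s), zpow_natCast, mul_comm]
  show (Matrix.of fun r s : Fin N => g s ^ (e s + (r : ℕ))).det ≠ 0
  rw [key, Matrix.det_mul, Matrix.det_transpose, Matrix.det_diagonal]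
  exact mul_ne_zero (Matrix.det_vandermonde_ne_zero_iff.mpr hginj)
    (Finset.prod_ne_zero_iff.mpr fun s _ => zpow_ne_zero _ (hg0 s))
end

section
/- Let K_n be the fraction field of the polynomial ring R_n = MvPolynomial over ℝ in variables X_1,…,X_n, and K_{2n} the fraction field of R_{2n} = MvPolynomial over ℝ in variables P_1,…,P_n, X_1,…,X_n; for λ ∈ ℝ let σ_λ : K_n → K_{2n} be the field embedding induced by X_m ↦ a_m(λ)·P_m + X_m. Let n_1, N_1, n_2, N_2 be positive integers with n_1·N_1 = n_2·N_2 = N, let μ_1,…,μ_{N_1} be distinct real numbers (viewed as constants in K_n and K_{2n}), let f_1,…,f_{N_2} be nonzero elements of K_n, let g_1,…,g_{N_2} be pairwise distinct elements of K_n with g_j ≠ μ_i for all i, j, let λ_1,…,λ_{N_2} ∈ ℝ and e_1,…,e_N ∈ ℤ. Then the N×N matrix over K_{2n} with rows indexed by pairs (k,i), 0 ≤ k ≤ n_1−1, 1 ≤ i ≤ N_1, columns by pairs (l,j), 0 ≤ l ≤ n_2−1, 1 ≤ j ≤ N_2 (both identified with {0,…,N−1} lexicographically, block index first), and entries binom(k+l,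 k) · σ_{λ_j}(f_j)^{e_{l·N_2+j}} / (μ_i − σ_{λ_j}(g_j))^{k+l+1}, has nonzero determinant. -/
open Finset

section Aux

open Polynomial

noncomputable def Tser {K : Type*} [Field K] (z : K) (k : ℕ) : PowerSeries K :=
  PowerSeries.mk fun m => (Nat.choose (k + m) k : K) / z ^ (k + m + 1)

lemma Tser_base {K : Type*} [Field K] {z : K} (hz : z ≠ 0) :
    ((PowerSeries.C z - PowerSeries.X)) * Tser z 0 = 1 := by
  ext m
  cases m with
  | zero =>
      simp [Tser, sub_mul, PowerSeries.coeff_zero_eq_constantCoeff, hz]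
  | succ m =>
      simp only [Tser, sub_mul, map_sub, PowerSeries.coeff_C_mul,
        PowerSeries.coeff_succ_X_mul, PowerSeries.coeff_mk, PowerSeries.coeff_one,
        Nat.succ_ne_zero, if_false, Nat.choose_zero_right, Nat.cast_one]
      field_simp
      ring

lemma Tser_step {K : Type*} [Field K] {z : K} (hz : z ≠ 0) (k : ℕ) :
    ((PowerSeries.C z - PowerSeries.X)) * Tser z (k + 1) = Tser z k := by
  ext m
  cases m with
  | zero =>
      simp only [Tser, sub_mul, map_sub, PowerSeries.coeff_C_mul,
        PowerSeries.coeff_zero_eq_constantCoeff]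
      simp [Nat.choose_self, hz, pow_succ]
  | succ m =>
      simp only [Tser, sub_mul, map_sub, PowerSeries.coeff_C_mul,
        PowerSeries.coeff_succ_X_mul, PowerSeries.coeff_mk]
      have pascal : (Nat.choose (k + 1 + (m+1)) (k+1) : ℕ)
          = Nat.choose (k + (m+1)) k + Nat.choose (k + 1 + m) (k+1) := by
        rw [show k + 1 + (m+1) = (k+(m+1))+1 from by omega, Nat.choose_succ_succ]
        congr 2
        omega
      rw [pascal]
      push_cast
      rw [show k + 1 + (m+1) + 1 = (k + (m+1) + 1) + 1 from by omega,
        show k + 1 + m + 1 = k + (m+1) + 1 from by omega]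
      field_simp
      ring

lemma Tser_spec {K : Type*} [Field K] {z : K} (hz : z ≠ 0) (k : ℕ) :
    ((PowerSeries.C z - PowerSeries.X)) ^ (k + 1) * Tser z k = 1 := by
  induction k with
  | zero => simpa using Tser_base hz
  | succ k ih =>
      calc ((PowerSeries.C z - PowerSeries.X)) ^ (k + 1 + 1) * Tser z (k+1)
          = ((PowerSeries.C z - PowerSeries.X)) ^ (k + 1)
            * (((PowerSeries.C z - PowerSeries.X)) * Tser z (k+1)) := by ring
        _ = 1 := by rw [Tser_step hz]; exact ih

lemma natDegree_C_sub_X {K : Type*} [Field K] (a : K) :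
    ((C a - X : K[X])).natDegree = 1 := by
  rw [show (C a - X : K[X]) = -(X - C a) by ring, natDegree_neg, natDegree_X_sub_C]

lemma core_det_ne_zero {K : Type*} [Field K]
    (n1 N1 n2 N2 N : ℕ) (hn1 : 0 < n1) (hN1 : 0 < N1) (hn2 : 0 < n2) (hN2 : 0 < N2)
    (h1 : n1 * N1 = N) (h2 : n2 * N2 = N)
    (x : Fin N1 → K) (y : Fin N2 → K)
    (hx : Function.Injective x) (hy : Function.Injective y)
    (hxy : ∀ i j, x i ≠ y j)
    (A : Matrix (Fin N) (Fin N) K)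
    (hA : ∀ (k : Fin n1) (i : Fin N1) (l : Fin n2) (j : Fin N2),
      A (Fin.cast h1 (finProdFinEquiv (k, i))) (Fin.cast h2 (finProdFinEquiv (l, j)))
        = (Nat.choose ((k:ℕ) + (l:ℕ)) (k:ℕ) : K) / (x i - y j) ^ ((k:ℕ) + (l:ℕ) + 1)) :
    A.det ≠ 0 := by
  intro hdet
  obtain ⟨v, hv0, hvA⟩ := Matrix.exists_vecMul_eq_zero_iff.mpr hdet
  -- the linear relations
  have hyp : ∀ (l : Fin n2) (j : Fin N2),
      ∑ p : Fin n1 × Fin N1,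
        v (Fin.cast h1 (finProdFinEquiv p))
          * ((Nat.choose ((p.1:ℕ) + (l:ℕ)) (p.1:ℕ) : K)
          / (x p.2 - y j) ^ ((p.1:ℕ) + (l:ℕ) + 1)) = 0 := by
    intro l j
    have h0 := congrFun hvA (Fin.cast h2 (finProdFinEquiv (l, j)))
    simp only [Matrix.vecMul, dotProduct, Pi.zero_apply] at h0
    rw [← Fintype.sum_equiv (finProdFinEquiv.trans (finCongr h1))
      (fun p => v (Fin.cast h1 (finProdFinEquiv p))
        * A (Fin.cast h1 (finProdFinEquiv p)) (Fin.cast h2 (finProdFinEquiv (l, j))))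
      (fun r => v r * A r (Fin.cast h2 (finProdFinEquiv (l, j))))
      (fun p => rfl)] at h0
    rw [← h0]
    refine Fintype.sum_congr _ _ (fun p => ?_)
    rw [hA p.1 p.2 l j]
  -- the big polynomial
  set G : K[X] := ∑ p : Fin n1 × Fin N1,
      C (v (Fin.cast h1 (finProdFinEquiv p))) * (C (x p.2) - X) ^ (n1 - 1 - (p.1:ℕ))
        * ∏ i' ∈ univ.erase p.2, (C (x i') - X) ^ n1 with hG
  -- divisibility at each y j
  have hdvd : ∀ j : Fin N2, (X - C (y j)) ^ n2 ∣ G := by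
    intro j
    have hzne : ∀ i, x i - y j ≠ 0 := fun i => sub_ne_zero.mpr (hxy i j)
    have hshift : ∀ w : K, C w - (X + C (y j)) = (C (w - y j) - X : K[X]) := by
      intro w; rw [map_sub]; ring
    have hGc : G.comp (X + C (y j)) = ∑ p : Fin n1 × Fin N1,
        C (v (Fin.cast h1 (finProdFinEquiv p)))
          * (C (x p.2 - y j) - X) ^ (n1 - 1 - (p.1:ℕ))
          * ∏ i' ∈ univ.erase p.2, (C (x i' - y j) - X) ^ n1 := by
      rw [hG, Polynomial.sum_comp]
      refine Fintype.sum_congr _ _ (fun p => ?_)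
      rw [Polynomial.mul_comp, Polynomial.mul_comp, Polynomial.pow_comp,
        Polynomial.prod_comp, Polynomial.C_comp, Polynomial.sub_comp,
        Polynomial.C_comp, Polynomial.X_comp]
      rw [hshift]
      congr 1
      refine Finset.prod_congr rfl (fun i' _ => ?_)
      rw [Polynomial.pow_comp, Polynomial.sub_comp, Polynomial.C_comp,
        Polynomial.X_comp, hshift]
    -- power series factorization
    have hfact : ((G.comp (X + C (y j)) : K[X]) : PowerSeries K)
        = (∏ i : Fin N1, (PowerSeries.C (x i - y j) - PowerSeries.X) ^ n1)
          * ∑ p : Fin n1 × Fin N1,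
              PowerSeries.C (v (Fin.cast h1 (finProdFinEquiv p)))
                * Tser (x p.2 - y j) (p.1:ℕ) := by
      rw [hGc, ← Polynomial.coeToPowerSeries.ringHom_apply, map_sum, Finset.mul_sum]
      refine Fintype.sum_congr _ _ (fun p => ?_)
      rw [map_mul, map_mul, map_pow, map_prod]
      simp only [Polynomial.coe_sub, Polynomial.coe_C, Polynomial.coe_X,
        Polynomial.coeToPowerSeries.ringHom_apply, map_pow]
      have key0 : ∀ kk : ℕ, kk < n1 →
          (PowerSeries.C (x p.2 - y j) - PowerSeries.X) ^ n1
            * Tser (x p.2 - y j) kk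
          = (PowerSeries.C (x p.2 - y j) - PowerSeries.X) ^ (n1 - 1 - kk) := by
        intro kk hkk
        have he : n1 - 1 - kk + (kk + 1) = n1 := by omega
        calc (PowerSeries.C (x p.2 - y j) - PowerSeries.X) ^ n1
              * Tser (x p.2 - y j) kk
            = (PowerSeries.C (x p.2 - y j) - PowerSeries.X) ^ (n1 - 1 - kk)
              * ((PowerSeries.C (x p.2 - y j) - PowerSeries.X) ^ (kk + 1)
                * Tser (x p.2 - y j) kk) := by
              rw [← mul_assoc, ← pow_add, he]
          _ = (PowerSeries.C (x p.2 - y j) - PowerSeries.X) ^ (n1 - 1 - kk) := by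
              rw [Tser_spec (hzne p.2), mul_one]
      have key := key0 (p.1:ℕ) p.1.isLt
      rw [← Finset.mul_prod_erase univ
        (fun i => (PowerSeries.C (x i - y j) - PowerSeries.X) ^ n1) (mem_univ p.2)]
      rw [show ((PowerSeries.C (x p.2 - y j) - PowerSeries.X) ^ n1
          * ∏ i' ∈ univ.erase p.2, (PowerSeries.C (x i' - y j) - PowerSeries.X) ^ n1)
          * (PowerSeries.C (v (Fin.cast h1 (finProdFinEquiv p)))
            * Tser (x p.2 - y j) (p.1:ℕ))
          = PowerSeries.C (v (Fin.cast h1 (finProdFinEquiv p)))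
            * ((PowerSeries.C (x p.2 - y j) - PowerSeries.X) ^ n1
              * Tser (x p.2 - y j) (p.1:ℕ))
            * ∏ i' ∈ univ.erase p.2,
                (PowerSeries.C (x i' - y j) - PowerSeries.X) ^ n1 from by ring]
      rw [key]
    -- coefficients below n2 vanish
    have hFdvd : (PowerSeries.X : PowerSeries K) ^ n2 ∣
        ∑ p : Fin n1 × Fin N1,
          PowerSeries.C (v (Fin.cast h1 (finProdFinEquiv p)))
            * Tser (x p.2 - y j) (p.1:ℕ) := by
      rw [PowerSeries.X_pow_dvd_iff]
      intro m hm
      rw [map_sum, ← hyp ⟨m, hm⟩ j]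
      refine Fintype.sum_congr _ _ (fun p => ?_)
      rw [PowerSeries.coeff_C_mul, Tser, PowerSeries.coeff_mk]
    have hGcdvd : (X : K[X]) ^ n2 ∣ G.comp (X + C (y j)) := by
      rw [Polynomial.X_pow_dvd_iff]
      intro m hm
      rw [← Polynomial.coeff_coe]
      have hh : (PowerSeries.X : PowerSeries K) ^ n2 ∣
          ((G.comp (X + C (y j)) : K[X]) : PowerSeries K) := by
        rw [hfact]; exact Dvd.dvd.mul_left hFdvd _
      exact (PowerSeries.X_pow_dvd_iff.mp hh) m hm
    obtain ⟨q, hq⟩ := hGcdvd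
    refine ⟨q.comp (X - C (y j)), ?_⟩
    have hGG : (G.comp (X + C (y j))).comp (X - C (y j)) = G := by
      rw [Polynomial.comp_assoc]
      simp [sub_add_cancel]
    rw [← hGG, hq, Polynomial.mul_comp, Polynomial.pow_comp, Polynomial.X_comp]
  -- G = 0 by degree count
  have hNpos : 0 < N := h1 ▸ Nat.mul_pos hn1 hN1
  have hB : (n1 - 1) + (N1 - 1) * n1 + 1 = N := by
    calc (n1 - 1) + (N1 - 1) * n1 + 1 = ((n1 - 1) + 1) + (N1 - 1) * n1 := by ring
      _ = n1 + (N1 - 1) * n1 := by rw [Nat.sub_add_cancel hn1]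
      _ = ((N1 - 1) + 1) * n1 := by ring
      _ = N1 * n1 := by rw [Nat.sub_add_cancel hN1]
      _ = N := by rw [mul_comm]; exact h1
  have hGzero : G = 0 := by
    by_contra hG0
    have hdvdall : (∏ j : Fin N2, (X - C (y j)) ^ n2) ∣ G := by
      refine Finset.prod_dvd_of_coprime ?_ (fun j _ => hdvd j)
      intro j1 _ j2 _ hne
      exact (Polynomial.pairwise_coprime_X_sub_C hy hne).pow
    have hprodddeg : (∏ j : Fin N2, ((X - C (y j)) ^ n2 : K[X])).natDegree = N := by
      rw [Polynomial.natDegree_prod _ _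
        (fun j _ => pow_ne_zero _ (Polynomial.X_sub_C_ne_zero (y j)))]
      rw [Finset.sum_congr rfl (fun j _ => by
        rw [Polynomial.natDegree_pow, natDegree_X_sub_C, mul_one])]
      rw [Finset.sum_const, Finset.card_univ, Fintype.card_fin, smul_eq_mul, mul_comm]
      exact h2
    have hdeg1 : N ≤ G.natDegree := by
      rw [← hprodddeg]
      exact Polynomial.natDegree_le_of_dvd hdvdall hG0
    have hdeg2 : G.natDegree ≤ (n1 - 1) + (N1 - 1) * n1 := by
      rw [hG]
      refine Polynomial.natDegree_sum_le_of_forall_le _ _ (fun p _ => ?_)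
      refine le_trans (Polynomial.natDegree_mul_le) (add_le_add ?_ ?_)
      · refine le_trans (Polynomial.natDegree_mul_le) ?_
        rw [Polynomial.natDegree_C, zero_add]
        refine le_trans (Polynomial.natDegree_pow_le) ?_
        rw [natDegree_C_sub_X, mul_one]
        have := p.1.isLt; omega
      · refine le_trans (Polynomial.natDegree_prod_le _ _) ?_
        refine le_trans (Finset.sum_le_card_nsmul _ _ n1 (fun i' _ => ?_)) ?_
        · refine le_trans (Polynomial.natDegree_pow_le) ?_
          rw [natDegree_C_sub_X, mul_one]
        · rw [Finset.card_erase_of_mem (mem_univ p.2), Finset.card_univ,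
            Fintype.card_fin, smul_eq_mul]
    omega
  -- extract coefficients
  have hcoef : ∀ (k : Fin n1) (i : Fin N1),
      v (Fin.cast h1 (finProdFinEquiv (k, i))) = 0 := by
    intro k0 i0
    have hGalt : (0 : K[X]) = ∑ i : Fin N1,
        (∑ k : Fin n1, C (v (Fin.cast h1 (finProdFinEquiv (k, i))))
            * (C (x i) - X) ^ (n1 - 1 - (k:ℕ)))
          * ∏ i' ∈ univ.erase i, (C (x i') - X) ^ n1 := by
      rw [← hGzero, hG, Fintype.sum_prod_type_right]
      refine Fintype.sum_congr _ _ (fun i => ?_)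
      rw [Finset.sum_mul]
    set Q : K[X] := ∑ k : Fin n1, C (v (Fin.cast h1 (finProdFinEquiv (k, i0))))
        * (C (x i0) - X) ^ (n1 - 1 - (k:ℕ)) with hQdef
    have hsplit : Q * (∏ i' ∈ univ.erase i0, ((C (x i') - X) ^ n1 : K[X]))
        = - ∑ i ∈ univ.erase i0,
            (∑ k : Fin n1, C (v (Fin.cast h1 (finProdFinEquiv (k, i))))
              * (C (x i) - X) ^ (n1 - 1 - (k:ℕ)))
            * ∏ i' ∈ univ.erase i, (C (x i') - X) ^ n1 := by
      have := Finset.add_sum_erase univ (fun i =>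
        (∑ k : Fin n1, C (v (Fin.cast h1 (finProdFinEquiv (k, i))))
          * (C (x i) - X) ^ (n1 - 1 - (k:ℕ)))
          * ∏ i' ∈ univ.erase i, ((C (x i') - X) ^ n1 : K[X])) (mem_univ i0)
      rw [← this] at hGalt
      linear_combination -hGalt
    have hdvdQP : (X - C (x i0)) ^ n1 ∣
        Q * ∏ i' ∈ univ.erase i0, ((C (x i') - X) ^ n1 : K[X]) := by
      rw [hsplit, dvd_neg]
      refine Finset.dvd_sum (fun i hi => ?_)
      have hi0 : i0 ∈ univ.erase i := by
        rw [Finset.mem_erase] at hi ⊢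
        exact ⟨fun h => hi.1 h.symm, mem_univ _⟩
      have base : ((X - C (x i0)) ^ n1 : K[X]) ∣ (C (x i0) - X) ^ n1 :=
        ⟨(-1) ^ n1, by rw [← mul_pow]; congr 1; ring⟩
      exact Dvd.dvd.mul_left
        (dvd_trans base (Finset.dvd_prod_of_mem (fun i' => ((C (x i') - X) ^ n1 : K[X])) hi0)) _
    have hnotdvd : ¬ (X - C (x i0) : K[X]) ∣
        ∏ i' ∈ univ.erase i0, ((C (x i') - X) ^ n1 : K[X]) := by
      rw [Polynomial.dvd_iff_isRoot]
      intro hroot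
      rw [Polynomial.IsRoot, Polynomial.eval_prod] at hroot
      rw [Finset.prod_eq_zero_iff] at hroot
      obtain ⟨i', hi', hval⟩ := hroot
      rw [Polynomial.eval_pow, Polynomial.eval_sub, Polynomial.eval_C,
        Polynomial.eval_X] at hval
      rw [pow_eq_zero_iff (Nat.pos_iff_ne_zero.mp hn1), sub_eq_zero] at hval
      exact (Finset.mem_erase.mp hi').1 (hx hval)
    have hQdvd : (X - C (x i0)) ^ n1 ∣ Q :=
      (Polynomial.prime_X_sub_C (x i0)).pow_dvd_of_dvd_mul_right n1 hnotdvd hdvdQP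
    have hQ0 : Q = 0 := by
      by_contra h
      have hd := Polynomial.natDegree_le_of_dvd hQdvd h
      rw [Polynomial.natDegree_pow, natDegree_X_sub_C, mul_one] at hd
      have hd2 : Q.natDegree ≤ n1 - 1 := by
        rw [hQdef]
        refine Polynomial.natDegree_sum_le_of_forall_le _ _ (fun k _ => ?_)
        refine le_trans (Polynomial.natDegree_mul_le) ?_
        rw [Polynomial.natDegree_C, zero_add]
        refine le_trans (Polynomial.natDegree_pow_le) ?_
        rw [natDegree_C_sub_X, mul_one]
        have := k.isLt; omega
      omega
    have hQc : (0 : K[X]) = ∑ k : Fin n1,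
        C (v (Fin.cast h1 (finProdFinEquiv (k, i0)))) * X ^ (n1 - 1 - (k:ℕ)) := by
      have : Q.comp (C (x i0) - X) = ∑ k : Fin n1,
          C (v (Fin.cast h1 (finProdFinEquiv (k, i0)))) * X ^ (n1 - 1 - (k:ℕ)) := by
        rw [hQdef, Polynomial.sum_comp]
        refine Fintype.sum_congr _ _ (fun k => ?_)
        rw [Polynomial.mul_comp, Polynomial.C_comp, Polynomial.pow_comp,
          Polynomial.sub_comp, Polynomial.C_comp, Polynomial.X_comp]
        congr 2
        ring
      rw [← this, hQ0, Polynomial.zero_comp]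
    have := congrArg (fun p : K[X] => p.coeff (n1 - 1 - (k0:ℕ))) hQc
    simp only [Polynomial.coeff_zero, Polynomial.finset_sum_coeff,
      Polynomial.coeff_C_mul, Polynomial.coeff_X_pow] at this
    rw [Finset.sum_eq_single k0] at this
    · simpa using this.symm
    · intro k _ hk
      have hne : n1 - 1 - (k0:ℕ) ≠ n1 - 1 - (k:ℕ) := by
        have h1' := k.isLt; have h2' := k0.isLt
        have : (k:ℕ) ≠ (k0:ℕ) := fun h => hk (Fin.ext h)
        omega
      rw [if_neg hne, mul_zero]
    · intro h
      exact absurd (mem_univ k0) h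
  apply hv0
  funext r
  have hext : r = Fin.cast h1 (finProdFinEquiv
      ((finProdFinEquiv.symm (Fin.cast h1.symm r)).1,
       (finProdFinEquiv.symm (Fin.cast h1.symm r)).2)) := by
    show r = Fin.cast h1 (finProdFinEquiv (finProdFinEquiv.symm (Fin.cast h1.symm r)))
    rw [Equiv.apply_symm_apply]
    apply Fin.ext
    simp
  rw [hext, hcoef]
  rfl

end Aux

/-- The retraction `R_{2n} → R_n` sending `P_m ↦ 0`, `X_m ↦ X_m`. -/
noncomputable def retrHom (n : ℕ) :
    MvPolynomial (Fin n ⊕ Fin n) ℝ →+* MvPolynomial (Fin n) ℝ :=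
  (MvPolynomial.aeval (Sum.elim (fun _ => (0 : MvPolynomial (Fin n) ℝ))
    MvPolynomial.X)).toRingHom

lemma retr_subst (n M : ℕ) (a : Fin n → ℕ → ℝ) (l : ℝ) (p : MvPolynomial (Fin n) ℝ) :
    retrHom n (substHom n M a l p) = p := by
  have hcomp : (retrHom n).comp (substHom n M a l)
      = RingHom.id (MvPolynomial (Fin n) ℝ) := by
    apply MvPolynomial.ringHom_ext
    · intro r
      simp [retrHom, substHom, MvPolynomial.algebraMap_eq]
    · intro m
      simp [retrHom, substHom, MvPolynomial.algebraMap_eq]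
  exact RingHom.congr_fun hcomp p

lemma subst_C (n M : ℕ) (a : Fin n → ℕ → ℝ) (l : ℝ) (r : ℝ) :
    substHom n M a l (MvPolynomial.C r) = MvPolynomial.C r := by
  simp [substHom, MvPolynomial.algebraMap_eq]

theorem stmt_15 (n M : ℕ) (hn : 2 ≤ n)
    (n1 N1 n2 N2 N : ℕ)
    (hn1 : 0 < n1) (hN1 : 0 < N1) (hn2 : 0 < n2) (hN2 : 0 < N2)
    (h1 : n1 * N1 = N) (h2 : n2 * N2 = N)
    (a : Fin n → ℕ → ℝ)
    (σ : ℝ → (FractionRing (MvPolynomial (Fin n) ℝ)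
      →+* FractionRing (MvPolynomial (Fin n ⊕ Fin n) ℝ)))
    (hσ : ∀ (l : ℝ) (p : MvPolynomial (Fin n) ℝ),
      σ l (algebraMap (MvPolynomial (Fin n) ℝ) (FractionRing (MvPolynomial (Fin n) ℝ)) p)
        = algebraMap (MvPolynomial (Fin n ⊕ Fin n) ℝ)
            (FractionRing (MvPolynomial (Fin n ⊕ Fin n) ℝ)) (substHom n M a l p))
    (μ : Fin N1 → ℝ) (hμ : Function.Injective μ)
    (f : Fin N2 → FractionRing (MvPolynomial (Fin n) ℝ)) (hf0 : ∀ j, f j ≠ 0)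
    (g : Fin N2 → FractionRing (MvPolynomial (Fin n) ℝ))
    (hgd : ∀ i j, i ≠ j → g i ≠ g j)
    (hgμ : ∀ (i : Fin N1) (j : Fin N2),
      g j ≠ algebraMap (MvPolynomial (Fin n) ℝ) (FractionRing (MvPolynomial (Fin n) ℝ))
        (MvPolynomial.C (μ i)))
    (lam : Fin N2 → ℝ) (e : Fin N → ℤ)
    (H2 : Matrix (Fin N) (Fin N) (FractionRing (MvPolynomial (Fin n ⊕ Fin n) ℝ)))
    (hH2 : ∀ (k : Fin n1) (i : Fin N1) (l : Fin n2) (j : Fin N2),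
      H2 (Fin.cast h1 (finProdFinEquiv (k, i))) (Fin.cast h2 (finProdFinEquiv (l, j)))
        = (Nat.choose ((k : ℕ) + (l : ℕ)) (k : ℕ) :
              FractionRing (MvPolynomial (Fin n ⊕ Fin n) ℝ))
            * (σ (lam j)) (f j) ^ (e (Fin.cast h2 (finProdFinEquiv (l, j))))
            / (algebraMap (MvPolynomial (Fin n ⊕ Fin n) ℝ)
                  (FractionRing (MvPolynomial (Fin n ⊕ Fin n) ℝ))
                  (MvPolynomial.C (μ i))
                - (σ (lam j)) (g j)) ^ ((k : ℕ) + (l : ℕ) + 1)) :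
    H2.det ≠ 0 := by
  classical
  -- injectivity of all the σ's jointly
  have hσinj2 : ∀ (l l' : ℝ) (u u' : FractionRing (MvPolynomial (Fin n) ℝ)),
      σ l u = σ l' u' → u = u' := by
    intro l l' u u' h
    obtain ⟨⟨p, q⟩, hu⟩ := IsLocalization.surj (nonZeroDivisors (MvPolynomial (Fin n) ℝ)) u
    obtain ⟨⟨p', q'⟩, hu'⟩ := IsLocalization.surj (nonZeroDivisors (MvPolynomial (Fin n) ℝ)) u'
    have h1' := congrArg (σ l) hu
    rw [map_mul, hσ, hσ] at h1'
    have h2' := congrArg (σ l') hu'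
    rw [map_mul, hσ, hσ] at h2'
    have key : substHom n M a l p * substHom n M a l' (q' : MvPolynomial (Fin n) ℝ)
        = substHom n M a l' p' * substHom n M a l (q : MvPolynomial (Fin n) ℝ) := by
      apply IsFractionRing.injective (MvPolynomial (Fin n ⊕ Fin n) ℝ)
        (FractionRing (MvPolynomial (Fin n ⊕ Fin n) ℝ))
      rw [map_mul, map_mul, ← h1', ← h2', h]
      ring
    have key2 := congrArg (retrHom n) key
    rw [map_mul, map_mul, retr_subst, retr_subst, retr_subst, retr_subst] at key2
    have hq0 : algebraMap (MvPolynomial (Fin n) ℝ) (FractionRing (MvPolynomial (Fin n) ℝ))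
        (q : MvPolynomial (Fin n) ℝ) ≠ 0 :=
      IsFractionRing.to_map_ne_zero_of_mem_nonZeroDivisors q.2
    have hq'0 : algebraMap (MvPolynomial (Fin n) ℝ) (FractionRing (MvPolynomial (Fin n) ℝ))
        (q' : MvPolynomial (Fin n) ℝ) ≠ 0 :=
      IsFractionRing.to_map_ne_zero_of_mem_nonZeroDivisors q'.2
    apply mul_right_cancel₀ (mul_ne_zero hq0 hq'0)
    calc u * (algebraMap _ _ (q : MvPolynomial (Fin n) ℝ)
          * algebraMap _ _ (q' : MvPolynomial (Fin n) ℝ))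
        = (u * algebraMap _ _ (q : MvPolynomial (Fin n) ℝ))
          * algebraMap _ _ (q' : MvPolynomial (Fin n) ℝ) := by ring
      _ = algebraMap _ _ (p * (q' : MvPolynomial (Fin n) ℝ)) := by rw [hu, map_mul]
      _ = algebraMap _ _ (p' * (q : MvPolynomial (Fin n) ℝ)) := by rw [key2]
      _ = (u' * algebraMap _ _ (q' : MvPolynomial (Fin n) ℝ))
          * algebraMap _ _ (q : MvPolynomial (Fin n) ℝ) := by rw [hu', map_mul]
      _ = u' * (algebraMap _ _ (q : MvPolynomial (Fin n) ℝ)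
          * algebraMap _ _ (q' : MvPolynomial (Fin n) ℝ)) := by ring
  -- the points
  set x : Fin N1 → FractionRing (MvPolynomial (Fin n ⊕ Fin n) ℝ) := fun i =>
    algebraMap (MvPolynomial (Fin n ⊕ Fin n) ℝ)
      (FractionRing (MvPolynomial (Fin n ⊕ Fin n) ℝ)) (MvPolynomial.C (μ i)) with hxdef
  set y : Fin N2 → FractionRing (MvPolynomial (Fin n ⊕ Fin n) ℝ) := fun j =>
    σ (lam j) (g j) with hydef
  have hxconst : ∀ (l : ℝ) (i : Fin N1),
      σ l (algebraMap (MvPolynomial (Fin n) ℝ) (FractionRing (MvPolynomial (Fin n) ℝ))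
        (MvPolynomial.C (μ i))) = x i := by
    intro l i
    rw [hσ, subst_C, hxdef]
  have hxinj : Function.Injective x := by
    intro i i' hii
    exact hμ (MvPolynomial.C_injective _ _ (IsFractionRing.injective _ _ hii))
  have hyinj : Function.Injective y := by
    intro j j' hjj
    by_contra hne
    exact hgd j j' hne (hσinj2 (lam j) (lam j') (g j) (g j') hjj)
  have hxy : ∀ i j, x i ≠ y j := by
    intro i j hij
    refine hgμ i j ?_
    refine (hσinj2 (lam j) (lam j) (g j)
      (algebraMap (MvPolynomial (Fin n) ℝ) (FractionRing (MvPolynomial (Fin n) ℝ))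
        (MvPolynomial.C (μ i))) ?_)
    rw [hxconst (lam j) i]
    exact hij.symm
  -- decoding
  have hdec1 : ∀ (k : Fin n1) (i : Fin N1),
      finProdFinEquiv.symm (Fin.cast h1.symm (Fin.cast h1 (finProdFinEquiv (k, i))))
        = (k, i) := by
    intro k i
    have hcc : Fin.cast h1.symm (Fin.cast h1 (finProdFinEquiv (k, i)))
        = finProdFinEquiv (k, i) := by
      apply Fin.ext; simp
    rw [hcc, Equiv.symm_apply_apply]
  have hdec2 : ∀ (l : Fin n2) (j : Fin N2),
      finProdFinEquiv.symm (Fin.cast h2.symm (Fin.cast h2 (finProdFinEquiv (l, j))))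
        = (l, j) := by
    intro l j
    have hcc : Fin.cast h2.symm (Fin.cast h2 (finProdFinEquiv (l, j)))
        = finProdFinEquiv (l, j) := by
      apply Fin.ext; simp
    rw [hcc, Equiv.symm_apply_apply]
  -- the Cauchy-type matrix and the column scalings
  set A : Matrix (Fin N) (Fin N) (FractionRing (MvPolynomial (Fin n ⊕ Fin n) ℝ)) :=
    Matrix.of (fun r c =>
      (Nat.choose (((finProdFinEquiv.symm (Fin.cast h1.symm r)).1 : ℕ)
          + ((finProdFinEquiv.symm (Fin.cast h2.symm c)).1 : ℕ))
          ((finProdFinEquiv.symm (Fin.cast h1.symm r)).1 : ℕ) :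
            FractionRing (MvPolynomial (Fin n ⊕ Fin n) ℝ))
        / (x (finProdFinEquiv.symm (Fin.cast h1.symm r)).2
            - y (finProdFinEquiv.symm (Fin.cast h2.symm c)).2)
          ^ (((finProdFinEquiv.symm (Fin.cast h1.symm r)).1 : ℕ)
            + ((finProdFinEquiv.symm (Fin.cast h2.symm c)).1 : ℕ) + 1)) with hAdef
  set d : Fin N → FractionRing (MvPolynomial (Fin n ⊕ Fin n) ℝ) := fun c =>
    σ (lam (finProdFinEquiv.symm (Fin.cast h2.symm c)).2)
      (f (finProdFinEquiv.symm (Fin.cast h2.symm c)).2) ^ (e c) with hddef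
  have hd0 : ∀ c, d c ≠ 0 := by
    intro c
    apply zpow_ne_zero
    intro h0
    exact hf0 _ ((σ _).injective (h0.trans (map_zero _).symm))
  have hh : ∀ (ch fv dv : FractionRing (MvPolynomial (Fin n ⊕ Fin n) ℝ)),
      ch * fv / dv = fv * (ch / dv) := fun ch fv dv => by ring
  have hfactor : H2 = Matrix.of (fun r c => d c * A r c) := by
    ext r c
    obtain ⟨⟨k, i⟩, hki⟩ : ∃ p : Fin n1 × Fin N1, r = Fin.cast h1 (finProdFinEquiv p) :=
      ⟨finProdFinEquiv.symm (Fin.cast h1.symm r), by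
        rw [Equiv.apply_symm_apply]; apply Fin.ext; simp⟩
    obtain ⟨⟨l, j⟩, hlj⟩ : ∃ p : Fin n2 × Fin N2, c = Fin.cast h2 (finProdFinEquiv p) :=
      ⟨finProdFinEquiv.symm (Fin.cast h2.symm c), by
        rw [Equiv.apply_symm_apply]; apply Fin.ext; simp⟩
    subst hki hlj
    rw [hH2 k i l j]
    simp only [Matrix.of_apply, hAdef, hddef, hdec1, hdec2, hxdef, hydef]
    exact hh _ _ _
  rw [hfactor, Matrix.det_mul_row d A]
  refine mul_ne_zero ?_ ?_
  · exact Finset.prod_ne_zero_iff.mpr (fun c _ => hd0 c)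
  · refine core_det_ne_zero n1 N1 n2 N2 N hn1 hN1 hn2 hN2 h1 h2 x y hxinj hyinj hxy A ?_
    intro k i l j
    simp only [Matrix.of_apply, hAdef, hdec1, hdec2]
end

section
/- Let a_{ik} ∈ ℝ and A_{il} : ℝ^n × ℝ^n → M_N(ℝ) be given for 1 ≤ i ≤ n and −M ≤ k,l ≤ M, with A_{il} continuously differentiable, and set b_i(λ) = Σ_{k=−M}^{M} a_{ik} λ^{k}, B_i(λ) = Σ_{l=−M}^{M} A_{il} λ^{l}. Suppose that for every real λ ≠ 0 there exists a twice continuously differentiable Ψ_λ : ℝ^n × ℝ^n → M_N(ℝ), invertible at every point, satisfying ∂Ψ_λ/∂p_i − b_i(λ) ∂Ψ_λ/∂x_i = −B_i(λ)Ψ_λ for all 1 ≤ i ≤ n. Then for all 1 ≤ i, j ≤ n and all (p,x): for every m with M+1 ≤ |m| ≤ 2M, Σ_{k+l=m, −M≤k,l≤M} [A_{ik},A_{jl}] + Σ_{k+l=m, −M≤k,l≤M} (a_{jk} ∂A_{il}/∂x_j − a_{ik} ∂A_{jl}/∂x_i) = 0; and for every m with −M ≤ m ≤ M, Σ_{k+l=m,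 −M≤k,l≤M} [A_{ik},A_{jl}] − ∂A_{im}/∂p_j + ∂A_{jm}/∂p_i + Σ_{k+l=m, −M≤k,l≤M} (a_{jk} ∂A_{il}/∂x_j − a_{ik} ∂A_{jl}/∂x_i) = 0. -/
open Finset

attribute [local instance] Matrix.linftyOpNormedAddCommGroup Matrix.linftyOpNormedSpace

attribute [local instance] Matrix.linftyOpNormedRing Matrix.linftyOpNormedAlgebra

section Helpers

open Polynomial

lemma scalar_extract (K : ℕ) (d : ℤ → ℝ)
    (h : ∀ lam : ℝ, lam ≠ 0 → ∑ m ∈ Icc (-(K:ℤ)) (K:ℤ), lam ^ m * d m = 0) :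
    ∀ m ∈ Icc (-(K:ℤ)) (K:ℤ), d m = 0 := by
  intro m0 hm0
  set p : Polynomial ℝ := ∑ m ∈ Icc (-(K:ℤ)) (K:ℤ), C (d m) * X ^ (m + K).toNat with hp
  have hpz : p = 0 := by
    apply Polynomial.eq_zero_of_infinite_isRoot
    apply Set.Infinite.mono (s := {(0:ℝ)}ᶜ)
    · intro lam hl
      simp only [Set.mem_compl_iff, Set.mem_singleton_iff] at hl
      have heval : p.eval lam = lam ^ (K:ℤ) * ∑ m ∈ Icc (-(K:ℤ)) (K:ℤ), lam ^ m * d m := by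
        rw [hp]
        simp only [eval_finset_sum, eval_mul, eval_C, eval_pow, eval_X, Finset.mul_sum]
        refine Finset.sum_congr rfl fun m hm => ?_
        rw [Finset.mem_Icc] at hm
        have h1 : lam ^ (m + K).toNat = lam ^ (m + K) := by
          rw [← zpow_natCast, Int.toNat_of_nonneg (by omega)]
        rw [h1, zpow_add₀ hl, zpow_natCast]
        ring
      simp only [Set.mem_setOf_eq, IsRoot.def, heval, h lam hl, mul_zero]
    · exact Set.Finite.infinite_compl (Set.finite_singleton 0)
  have := congrArg (fun q => Polynomial.coeff q (m0 + K).toNat) hpz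
  simp only [hp, Polynomial.finset_sum_coeff, coeff_C_mul, coeff_X_pow, coeff_zero] at this
  rw [Finset.sum_eq_single m0] at this
  · simpa using this
  · intro m hm hne
    rw [Finset.mem_Icc] at hm hm0
    have : (m + K).toNat ≠ (m0 + K).toNat := by omega
    simp [this.symm]
  · intro hm; exact absurd hm0 hm

lemma matrix_extract (N K : ℕ) (c : ℤ → Matrix (Fin N) (Fin N) ℝ)
    (h : ∀ lam : ℝ, lam ≠ 0 → ∑ m ∈ Icc (-(K:ℤ)) (K:ℤ), lam ^ m • c m = 0) :
    ∀ m ∈ Icc (-(K:ℤ)) (K:ℤ), c m = 0 := by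
  intro m0 hm0
  ext r s
  have := scalar_extract K (fun m => c m r s) (fun lam hl => by
    have := congrFun (congrFun (h lam hl) r) s
    rw [Matrix.sum_apply] at this
    simpa [Matrix.smul_apply, smul_eq_mul] using this) m0 hm0
  simpa using this

lemma fiber_sum {V : Type*} [AddCommMonoid V] [Module ℝ V] (M : ℕ) (lam : ℝ)
    (f : ℤ × ℤ → V) :
    ∑ m ∈ Icc (-(2*M:ℕ):ℤ) ((2*M:ℕ):ℤ), lam ^ m •
      ∑ kl ∈ (Icc (-(M:ℤ)) (M:ℤ) ×ˢ Icc (-(M:ℤ)) (M:ℤ)).filter (fun kl => kl.1 + kl.2 = m), f kl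
    = ∑ kl ∈ Icc (-(M:ℤ)) (M:ℤ) ×ˢ Icc (-(M:ℤ)) (M:ℤ), lam ^ (kl.1 + kl.2) • f kl := by
  rw [← Finset.sum_fiberwise_of_maps_to (g := fun kl : ℤ × ℤ => kl.1 + kl.2)
    (t := Icc (-(2*M:ℕ):ℤ) ((2*M:ℕ):ℤ)) ?_ (fun kl => lam ^ (kl.1 + kl.2) • f kl)]
  · refine Finset.sum_congr rfl fun m hm => ?_
    rw [Finset.smul_sum]
    refine Finset.sum_congr rfl fun kl hkl => ?_
    rw [(Finset.mem_filter.mp hkl).2]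
  · intro kl hkl
    simp only [Finset.mem_product, Finset.mem_Icc] at hkl
    simp only [Finset.mem_Icc]
    push_cast
    omega

lemma swap_sum {V : Type*} [AddCommMonoid V] (S : Finset ℤ) (F : ℤ → ℤ → V) :
    ∑ kl ∈ S ×ˢ S, F kl.1 kl.2 = ∑ kl ∈ S ×ˢ S, F kl.2 kl.1 := by
  rw [Finset.sum_product, Finset.sum_product]
  exact Finset.sum_comm

lemma key_curv {E : Type*} [NormedAddCommGroup E] [NormedSpace ℝ E]
    {N : ℕ} (Ψ Bi Bj : E → Matrix (Fin N) (Fin N) ℝ)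
    (hΨ : ContDiff ℝ 2 Ψ) (hU : ∀ y, IsUnit (Ψ y))
    (hBi : Differentiable ℝ Bi) (hBj : Differentiable ℝ Bj)
    (wi wj : E) (q : E)
    (hEi : ∀ y, fderiv ℝ Ψ y wi = -(Bi y * Ψ y))
    (hEj : ∀ y, fderiv ℝ Ψ y wj = -(Bj y * Ψ y)) :
    Bi q * Bj q - Bj q * Bi q - fderiv ℝ Bi q wj + fderiv ℝ Bj q wi = 0 := by
  letI : NormedAddCommGroup (E →L[ℝ] Matrix (Fin N) (Fin N) ℝ) :=
    ContinuousLinearMap.toNormedAddCommGroup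
  letI : NormedSpace ℝ (E →L[ℝ] Matrix (Fin N) (Fin N) ℝ) := ContinuousLinearMap.toNormedSpace
  have hΨd : Differentiable ℝ Ψ := hΨ.differentiable (by norm_num)
  have hΨ1 : ContDiff ℝ 1 (fderiv ℝ Ψ) := hΨ.fderiv_right (by norm_num)
  have hΨ'd : Differentiable ℝ (fderiv ℝ Ψ) := hΨ1.differentiable (by norm_num)
  have hsymm : fderiv ℝ (fderiv ℝ Ψ) q wi wj = fderiv ℝ (fderiv ℝ Ψ) q wj wi :=
    second_derivative_symmetric (fun y => (hΨd y).hasFDerivAt) (hΨ'd q).hasFDerivAt wi wj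
  have bridge : ∀ v u : E, fderiv ℝ (fun z => fderiv ℝ Ψ z v) q u
      = fderiv ℝ (fderiv ℝ Ψ) q u v := by
    intro v u
    erw [fderiv_clm_apply (hΨ'd q) (differentiableAt_const v)]
    show fderiv ℝ Ψ q (fderiv ℝ (fun _ : E => v) q u) + fderiv ℝ (fderiv ℝ Ψ) q u v = _
    simp
  have main : ∀ (v u : E) (Bk Bl : E → Matrix (Fin N) (Fin N) ℝ), Differentiable ℝ Bk →
      (∀ y, fderiv ℝ Ψ y v = -(Bk y * Ψ y)) →
      (∀ y, fderiv ℝ Ψ y u = -(Bl y * Ψ y)) →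
      fderiv ℝ (fderiv ℝ Ψ) q u v
        = -(Bk q * (-(Bl q * Ψ q)) + fderiv ℝ Bk q u * Ψ q) := by
    intro v u Bk Bl hBk hEk hEl
    have h1 : (fun z => fderiv ℝ Ψ z v) = fun z => -(Bk z * Ψ z) := funext hEk
    have h2 : fderiv ℝ (fun z => fderiv ℝ Ψ z v) q u
        = -(Bk q * (-(Bl q * Ψ q)) + fderiv ℝ Bk q u * Ψ q) := by
      rw [h1]
      have : fderiv ℝ (fun z => -(Bk z * Ψ z)) q
          = -(Bk q • fderiv ℝ Ψ q + (fderiv ℝ Bk q).smulRight (Ψ q)) := by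
        erw [fderiv_fun_neg, fderiv_mul' (hBk q) (hΨd q)]
        rfl
      rw [this]
      simp only [ContinuousLinearMap.neg_apply, ContinuousLinearMap.add_apply,
        ContinuousLinearMap.smul_apply, ContinuousLinearMap.smulRight_apply, smul_eq_mul,
        hEl q]
    rw [← bridge v u, h2]
  have eq1 := main wi wj Bi Bj hBi hEi hEj
  have eq2 : fderiv ℝ (fderiv ℝ Ψ) q wi wj
      = -(Bj q * (-(Bi q * Ψ q)) + fderiv ℝ Bj q wi * Ψ q) := by
    exact main wj wi Bj Bi hBj hEj hEi
  have hXΨ : (Bi q * Bj q - Bj q * Bi q - fderiv ℝ Bi q wj + fderiv ℝ Bj q wi) * Ψ q = 0 := by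
    have h3 : -(Bi q * (-(Bj q * Ψ q)) + fderiv ℝ Bi q wj * Ψ q)
        = -(Bj q * (-(Bi q * Ψ q)) + fderiv ℝ Bj q wi * Ψ q) := by
      rw [← eq1, ← eq2, hsymm]
    calc (Bi q * Bj q - Bj q * Bi q - fderiv ℝ Bi q wj + fderiv ℝ Bj q wi) * Ψ q
        = -(Bi q * (-(Bj q * Ψ q)) + fderiv ℝ Bi q wj * Ψ q)
          - (-(Bj q * (-(Bi q * Ψ q)) + fderiv ℝ Bj q wi * Ψ q)) := by noncomm_ring
      _ = 0 := by rw [h3, sub_self]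
  obtain ⟨u, hu⟩ := hU q
  have h4 : (Bi q * Bj q - Bj q * Bi q - fderiv ℝ Bi q wj + fderiv ℝ Bj q wi)
      * (u : Matrix (Fin N) (Fin N) ℝ) = 0 := by
    rw [hu]; exact hXΨ
  calc (Bi q * Bj q - Bj q * Bi q - fderiv ℝ Bi q wj + fderiv ℝ Bj q wi)
      = (Bi q * Bj q - Bj q * Bi q - fderiv ℝ Bi q wj + fderiv ℝ Bj q wi) * u * ↑u⁻¹ := by
        rw [Units.mul_inv_cancel_right]
    _ = 0 * ↑u⁻¹ := by rw [h4]
    _ = 0 := zero_mul _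

end Helpers

/-- The matrix coefficient functions appearing in the compatibility system. -/
noncomputable def Bm {n N : ℕ} (M : ℕ)
    (A : Fin n → ℤ → ((Fin n → ℝ) × (Fin n → ℝ)) → Matrix (Fin N) (Fin N) ℝ)
    (lam : ℝ) (i : Fin n) (y : (Fin n → ℝ) × (Fin n → ℝ)) : Matrix (Fin N) (Fin N) ℝ :=
  ∑ l ∈ Icc (-(M:ℤ)) (M:ℤ), lam ^ l • A i l y

/-- The scalar coefficients appearing in the compatibility system. -/
noncomputable def bco {n : ℕ} (M : ℕ) (a : Fin n → ℤ → ℝ) (lam : ℝ) (i : Fin n) : ℝ :=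
  ∑ k ∈ Icc (-(M:ℤ)) (M:ℤ), a i k * lam ^ k

/-- The direction vector of the first-order operator. -/
noncomputable def wv {n : ℕ} (M : ℕ) (a : Fin n → ℤ → ℝ) (lam : ℝ) (i : Fin n) :
    (Fin n → ℝ) × (Fin n → ℝ) :=
  ((Pi.single i 1, 0) : (Fin n → ℝ) × (Fin n → ℝ)) - bco M a lam i • ((0, Pi.single i 1))

lemma lam_identity {n N M : ℕ}
    (a : Fin n → ℤ → ℝ)
    (A : Fin n → ℤ → ((Fin n → ℝ) × (Fin n → ℝ)) → Matrix (Fin N) (Fin N) ℝ)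
    (hA : ∀ (i : Fin n) (l : ℤ), -(M : ℤ) ≤ l → l ≤ M → ContDiff ℝ 1 (A i l))
    (lam : ℝ) (hl0 : lam ≠ 0)
    (Ψ : ((Fin n → ℝ) × (Fin n → ℝ)) → Matrix (Fin N) (Fin N) ℝ)
    (hΨ : ContDiff ℝ 2 Ψ) (hU : ∀ q, IsUnit (Ψ q))
    (heq : ∀ (i : Fin n) q,
      pderivP Ψ i q - (∑ k ∈ Finset.Icc (-(M : ℤ)) (M : ℤ), a i k * lam ^ k) • pderivX Ψ i q
        = -((∑ l ∈ Finset.Icc (-(M : ℤ)) (M : ℤ), lam ^ l • A i l q) * Ψ q))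
    (i j : Fin n) (q : (Fin n → ℝ) × (Fin n → ℝ)) :
    ∑ m ∈ Icc (-(2*M:ℕ):ℤ) ((2*M:ℕ):ℤ), lam ^ m •
      ((∑ kl ∈ (Finset.Icc (-(M : ℤ)) (M : ℤ) ×ˢ Finset.Icc (-(M : ℤ)) (M : ℤ)).filter
            (fun kl => kl.1 + kl.2 = m),
          (A i kl.1 q * A j kl.2 q - A j kl.2 q * A i kl.1 q))
        + (∑ kl ∈ (Finset.Icc (-(M : ℤ)) (M : ℤ) ×ˢ Finset.Icc (-(M : ℤ)) (M : ℤ)).filter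
              (fun kl => kl.1 + kl.2 = m),
            (a j kl.1 • pderivX (A i kl.2) j q - a i kl.1 • pderivX (A j kl.2) i q))
        + (if m ∈ Icc (-(M:ℤ)) (M:ℤ) then (- pderivP (A i m) j q + pderivP (A j m) i q) else 0))
      = 0 := by
  have hAd : ∀ (i' : Fin n) (l : ℤ), l ∈ Icc (-(M:ℤ)) (M:ℤ) → Differentiable ℝ (A i' l) := by
    intro i' l hl
    rw [Finset.mem_Icc] at hl
    exact (hA i' l hl.1 hl.2).differentiable (by norm_num)
  have hBfd : ∀ (i' : Fin n) (y : (Fin n → ℝ) × (Fin n → ℝ)), HasFDerivAt (Bm M A lam i')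
      (∑ l ∈ Icc (-(M:ℤ)) (M:ℤ), lam ^ l • fderiv ℝ (A i' l) y) y := by
    intro i' y
    exact HasFDerivAt.fun_sum fun l hl => (((hAd i' l hl) y).hasFDerivAt.const_smul (lam ^ l))
  have hBd : ∀ i', Differentiable ℝ (Bm M A lam i') := fun i' y => (hBfd i' y).differentiableAt
  have hE : ∀ (i' : Fin n) y, fderiv ℝ Ψ y (wv M a lam i') = -(Bm M A lam i' y * Ψ y) := by
    intro i' y
    have h0 := heq i' y
    simp only [pderivP, pderivX] at h0
    simp only [wv, map_sub, map_smul, bco, Bm]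
    exact h0
  have hkey := key_curv Ψ (Bm M A lam i) (Bm M A lam j) hΨ hU (hBd i) (hBd j)
    (wv M a lam i) (wv M a lam j) q (hE i) (hE j)
  have hprod : ∀ i' j' : Fin n, Bm M A lam i' q * Bm M A lam j' q
      = ∑ kl ∈ Icc (-(M:ℤ)) (M:ℤ) ×ˢ Icc (-(M:ℤ)) (M:ℤ),
          lam ^ (kl.1 + kl.2) • (A i' kl.1 q * A j' kl.2 q) := by
    intro i' j'
    rw [Finset.sum_product]
    simp only [Bm]
    rw [Finset.sum_mul_sum]
    refine Finset.sum_congr rfl fun k hk => Finset.sum_congr rfl fun l hl => ?_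
    rw [smul_mul_assoc, mul_smul_comm, smul_smul, ← zpow_add₀ hl0]
  have happ : ∀ (g : ((Fin n → ℝ) × (Fin n → ℝ)) → Matrix (Fin N) (Fin N) ℝ) (j' : Fin n),
      (fderiv ℝ g q) (wv M a lam j') = pderivP g j' q - bco M a lam j' • pderivX g j' q := by
    intro g j'
    simp only [wv, map_sub, map_smul, pderivP, pderivX]
    rfl
  have hdBw : ∀ i' j' : Fin n, fderiv ℝ (Bm M A lam i') q (wv M a lam j')
      = (∑ l ∈ Icc (-(M:ℤ)) (M:ℤ), lam ^ l • pderivP (A i' l) j' q)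
        - ∑ kl ∈ Icc (-(M:ℤ)) (M:ℤ) ×ˢ Icc (-(M:ℤ)) (M:ℤ),
            lam ^ (kl.1 + kl.2) • (a j' kl.1 • pderivX (A i' kl.2) j' q) := by
    intro i' j'
    rw [(hBfd i' q).fderiv, ContinuousLinearMap.sum_apply]
    simp only [ContinuousLinearMap.smul_apply]
    have hterm : ∀ l ∈ Icc (-(M:ℤ)) (M:ℤ),
        lam ^ l • (fderiv ℝ (A i' l) q) (wv M a lam j')
        = lam ^ l • pderivP (A i' l) j' q
          - ∑ k ∈ Icc (-(M:ℤ)) (M:ℤ), lam ^ (k + l) • (a j' k • pderivX (A i' l) j' q) := by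
      intro l hl
      rw [happ, smul_sub]
      congr 1
      simp only [bco]
      rw [Finset.sum_smul, Finset.smul_sum]
      refine Finset.sum_congr rfl fun k hk => ?_
      rw [smul_smul, smul_smul, zpow_add₀ hl0]
      congr 1
      ring
    rw [Finset.sum_congr rfl hterm, Finset.sum_sub_distrib]
    congr 1
    rw [Finset.sum_product]
    exact (Finset.sum_comm).symm
  -- now expand the goal
  have gsplit : ∀ (P1 P2 P3 : ℤ → Matrix (Fin N) (Fin N) ℝ),
      ∑ m ∈ Icc (-(2*M:ℕ):ℤ) ((2*M:ℕ):ℤ), lam ^ m • (P1 m + P2 m + P3 m)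
      = (∑ m ∈ Icc (-(2*M:ℕ):ℤ) ((2*M:ℕ):ℤ), lam ^ m • P1 m)
        + (∑ m ∈ Icc (-(2*M:ℕ):ℤ) ((2*M:ℕ):ℤ), lam ^ m • P2 m)
        + (∑ m ∈ Icc (-(2*M:ℕ):ℤ) ((2*M:ℕ):ℤ), lam ^ m • P3 m) := by
    intro P1 P2 P3
    simp only [smul_add]
    rw [Finset.sum_add_distrib, Finset.sum_add_distrib]
  rw [gsplit]
  have hP1 : (∑ m ∈ Icc (-(2*M:ℕ):ℤ) ((2*M:ℕ):ℤ), lam ^ m •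
      ∑ kl ∈ (Finset.Icc (-(M : ℤ)) (M : ℤ) ×ˢ Finset.Icc (-(M : ℤ)) (M : ℤ)).filter
          (fun kl => kl.1 + kl.2 = m),
        (A i kl.1 q * A j kl.2 q - A j kl.2 q * A i kl.1 q))
      = (∑ kl ∈ Icc (-(M:ℤ)) (M:ℤ) ×ˢ Icc (-(M:ℤ)) (M:ℤ),
          lam ^ (kl.1 + kl.2) • (A i kl.1 q * A j kl.2 q))
        - (∑ kl ∈ Icc (-(M:ℤ)) (M:ℤ) ×ˢ Icc (-(M:ℤ)) (M:ℤ),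
          lam ^ (kl.1 + kl.2) • (A j kl.1 q * A i kl.2 q)) := by
    rw [fiber_sum]
    simp only [smul_sub]
    rw [Finset.sum_sub_distrib]
    congr 1
    have := swap_sum (Icc (-(M:ℤ)) (M:ℤ))
      (fun k l => lam ^ (k + l) • (A j l q * A i k q))
    rw [this]
    refine Finset.sum_congr rfl fun kl _ => by rw [add_comm kl.2 kl.1]
  have hP2 : (∑ m ∈ Icc (-(2*M:ℕ):ℤ) ((2*M:ℕ):ℤ), lam ^ m •
      ∑ kl ∈ (Finset.Icc (-(M : ℤ)) (M : ℤ) ×ˢ Finset.Icc (-(M : ℤ)) (M : ℤ)).filter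
          (fun kl => kl.1 + kl.2 = m),
        (a j kl.1 • pderivX (A i kl.2) j q - a i kl.1 • pderivX (A j kl.2) i q))
      = (∑ kl ∈ Icc (-(M:ℤ)) (M:ℤ) ×ˢ Icc (-(M:ℤ)) (M:ℤ),
          lam ^ (kl.1 + kl.2) • (a j kl.1 • pderivX (A i kl.2) j q))
        - (∑ kl ∈ Icc (-(M:ℤ)) (M:ℤ) ×ˢ Icc (-(M:ℤ)) (M:ℤ),
          lam ^ (kl.1 + kl.2) • (a i kl.1 • pderivX (A j kl.2) i q)) := by
    rw [fiber_sum]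
    simp only [smul_sub]
    rw [Finset.sum_sub_distrib]
  have hsub : Icc (-(M:ℤ)) (M:ℤ) ⊆ Icc (-(2*M:ℕ):ℤ) ((2*M:ℕ):ℤ) := by
    intro x hx
    simp only [Finset.mem_Icc] at hx ⊢
    push_cast
    omega
  have hP3 : (∑ m ∈ Icc (-(2*M:ℕ):ℤ) ((2*M:ℕ):ℤ), lam ^ m •
      (if m ∈ Icc (-(M:ℤ)) (M:ℤ) then (- pderivP (A i m) j q + pderivP (A j m) i q) else 0))
      = - (∑ m ∈ Icc (-(M:ℤ)) (M:ℤ), lam ^ m • pderivP (A i m) j q)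
        + (∑ m ∈ Icc (-(M:ℤ)) (M:ℤ), lam ^ m • pderivP (A j m) i q) := by
    have h1 : ∀ m : ℤ, lam ^ m •
        (if m ∈ Icc (-(M:ℤ)) (M:ℤ) then (- pderivP (A i m) j q + pderivP (A j m) i q) else 0)
        = if m ∈ Icc (-(M:ℤ)) (M:ℤ) then
            lam ^ m • (- pderivP (A i m) j q + pderivP (A j m) i q) else 0 := by
      intro m; split <;> simp
    rw [Finset.sum_congr rfl fun m _ => h1 m, Finset.sum_ite_mem,
      Finset.inter_eq_right.mpr hsub]
    simp only [smul_add, smul_neg]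
    rw [Finset.sum_add_distrib, Finset.sum_neg_distrib]
  rw [hP1, hP2, hP3]
  rw [hprod i j, hprod j i, hdBw i j, hdBw j i] at hkey
  rw [← hkey]
  abel

theorem stmt_16 (n N M : ℕ) (hn : 2 ≤ n) (hN : 2 ≤ N)
    (a : Fin n → ℤ → ℝ)
    (A : Fin n → ℤ → ((Fin n → ℝ) × (Fin n → ℝ)) → Matrix (Fin N) (Fin N) ℝ)
    (hA : ∀ (i : Fin n) (l : ℤ), -(M : ℤ) ≤ l → l ≤ M → ContDiff ℝ 1 (A i l))
    (hcompat : ∀ lam : ℝ, lam ≠ 0 →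
      ∃ Ψ : ((Fin n → ℝ) × (Fin n → ℝ)) → Matrix (Fin N) (Fin N) ℝ,
        ContDiff ℝ 2 Ψ ∧ (∀ q, IsUnit (Ψ q)) ∧
        (∀ (i : Fin n) q,
          pderivP Ψ i q
              - (∑ k ∈ Finset.Icc (-(M : ℤ)) (M : ℤ), a i k * lam ^ k) • pderivX Ψ i q
            = -((∑ l ∈ Finset.Icc (-(M : ℤ)) (M : ℤ), lam ^ l • A i l q) * Ψ q))) :
    ∀ (i j : Fin n) q,
      (∀ m : ℤ, (M : ℤ) + 1 ≤ |m| → |m| ≤ 2 * M →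
        (∑ kl ∈ (Finset.Icc (-(M : ℤ)) (M : ℤ) ×ˢ Finset.Icc (-(M : ℤ)) (M : ℤ)).filter
            (fun kl => kl.1 + kl.2 = m),
          (A i kl.1 q * A j kl.2 q - A j kl.2 q * A i kl.1 q))
          + (∑ kl ∈ (Finset.Icc (-(M : ℤ)) (M : ℤ) ×ˢ Finset.Icc (-(M : ℤ)) (M : ℤ)).filter
              (fun kl => kl.1 + kl.2 = m),
            (a j kl.1 • pderivX (A i kl.2) j q - a i kl.1 • pderivX (A j kl.2) i q)) = 0) ∧
      (∀ m : ℤ, -(M : ℤ) ≤ m → m ≤ M →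
        (∑ kl ∈ (Finset.Icc (-(M : ℤ)) (M : ℤ) ×ˢ Finset.Icc (-(M : ℤ)) (M : ℤ)).filter
            (fun kl => kl.1 + kl.2 = m),
          (A i kl.1 q * A j kl.2 q - A j kl.2 q * A i kl.1 q))
          - pderivP (A i m) j q + pderivP (A j m) i q
          + (∑ kl ∈ (Finset.Icc (-(M : ℤ)) (M : ℤ) ×ˢ Finset.Icc (-(M : ℤ)) (M : ℤ)).filter
              (fun kl => kl.1 + kl.2 = m),
            (a j kl.1 • pderivX (A i kl.2) j q - a i kl.1 • pderivX (A j kl.2) i q)) = 0) := by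
  intro i j q
  have hc := matrix_extract N (2*M) (fun m =>
      (∑ kl ∈ (Finset.Icc (-(M : ℤ)) (M : ℤ) ×ˢ Finset.Icc (-(M : ℤ)) (M : ℤ)).filter
            (fun kl => kl.1 + kl.2 = m),
          (A i kl.1 q * A j kl.2 q - A j kl.2 q * A i kl.1 q))
        + (∑ kl ∈ (Finset.Icc (-(M : ℤ)) (M : ℤ) ×ˢ Finset.Icc (-(M : ℤ)) (M : ℤ)).filter
              (fun kl => kl.1 + kl.2 = m),
            (a j kl.1 • pderivX (A i kl.2) j q - a i kl.1 • pderivX (A j kl.2) i q))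
        + (if m ∈ Icc (-(M:ℤ)) (M:ℤ) then (- pderivP (A i m) j q + pderivP (A j m) i q) else 0))
    (by
      intro lam hl0
      obtain ⟨Ψ, hΨ, hU, heq⟩ := hcompat lam hl0
      exact lam_identity a A hA lam hl0 Ψ hΨ hU heq i j q)
  constructor
  · intro m hm1 hm2
    have habs := abs_le.mp hm2
    have habs2 := le_abs.mp hm1
    have hmem : m ∈ Icc (-((2*M:ℕ):ℤ)) ((2*M:ℕ):ℤ) := by
      simp only [Finset.mem_Icc]
      push_cast
      omega
    have h := hc m hmem
    have hnot : m ∉ Icc (-(M:ℤ)) (M:ℤ) := by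
      simp only [Finset.mem_Icc]
      omega
    rw [if_neg hnot, add_zero] at h
    exact h
  · intro m hm1 hm2
    have hmem : m ∈ Icc (-((2*M:ℕ):ℤ)) ((2*M:ℕ):ℤ) := by
      simp only [Finset.mem_Icc]
      push_cast
      omega
    have h := hc m hmem
    rw [if_pos (by simp only [Finset.mem_Icc]; omega)] at h
    calc (∑ kl ∈ (Finset.Icc (-(M : ℤ)) (M : ℤ) ×ˢ Finset.Icc (-(M : ℤ)) (M : ℤ)).filter
            (fun kl => kl.1 + kl.2 = m),
          (A i kl.1 q * A j kl.2 q - A j kl.2 q * A i kl.1 q))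
          - pderivP (A i m) j q + pderivP (A j m) i q
          + (∑ kl ∈ (Finset.Icc (-(M : ℤ)) (M : ℤ) ×ˢ Finset.Icc (-(M : ℤ)) (M : ℤ)).filter
              (fun kl => kl.1 + kl.2 = m),
            (a j kl.1 • pderivX (A i kl.2) j q - a i kl.1 • pderivX (A j kl.2) i q))
        = (∑ kl ∈ (Finset.Icc (-(M : ℤ)) (M : ℤ) ×ˢ Finset.Icc (-(M : ℤ)) (M : ℤ)).filter
            (fun kl => kl.1 + kl.2 = m),
          (A i kl.1 q * A j kl.2 q - A j kl.2 q * A i kl.1 q))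
          + (∑ kl ∈ (Finset.Icc (-(M : ℤ)) (M : ℤ) ×ˢ Finset.Icc (-(M : ℤ)) (M : ℤ)).filter
              (fun kl => kl.1 + kl.2 = m),
            (a j kl.1 • pderivX (A i kl.2) j q - a i kl.1 • pderivX (A j kl.2) i q))
          + (- pderivP (A i m) j q + pderivP (A j m) i q) := by abel
      _ = 0 := h
end
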